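/- arXiv:2307.10431 — 11 statements merged into one kernel-verified Lean document; each statement's English description precedes it below -/
import Mathlib

section
/- Let X be a finite-dimensional real inner product space, let 0 ≤ L < 1, and let f : X → X be Lipschitz continuous with Lipschitz constant at most L. Then the residual map φ = Id − f is bijective, and its inverse ψ = φ⁻¹ satisfies, for all z₁, z₂ ∈ X, the inequality (1 − L²)·‖ψ(z₁) − ψ(z₂)‖² + ‖z₁ − z₂‖² ≤ 2·⟨z₁ − z₂, ψ(z₁) − ψ(z₂)⟩. -/
/-!
Solving `x - f x = z` means finding a fixed point of the contraction `y ↦ z + f y`, so Banach's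
fixed point theorem makes `Id - f` bijective. For `xᵢ = ψ zᵢ`, the difference
`(x₁ - x₂) - (z₁ - z₂) = f x₁ - f x₂` has norm at most `L‖x₁ - x₂‖`; squaring and expanding
this bound gives the inequality.
-/

open RealInnerProductSpace
open scoped NNReal

theorem isFixedPt_add_iff_sub_eq {E : Type*} [AddGroup E] (f : E → E) (x z : E) :
    Function.IsFixedPt (fun y => z + f y) x ↔ x - f x = z :=
  eq_comm.trans sub_eq_iff_eq_add.symm

theorem ContractingWith.bijective_id_sub {E : Type*} [NormedAddCommGroup E] [CompleteSpace E]
    {K : ℝ≥0} {f : E → E} (hf : ContractingWith K f) :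
    Function.Bijective fun x => x - f x := by
  refine (Function.bijective_iff_existsUnique _).2 fun z => ?_
  have hg : ContractingWith K fun y => z + f y :=
    ⟨hf.1, fun x y => by simpa only [edist_add_left] using hf.2 x y⟩
  simp only [← isFixedPt_add_iff_sub_eq]
  have : Nonempty E := ⟨0⟩
  exact ⟨_, hg.fixedPoint_isFixedPt, fun _ hx => hg.fixedPoint_unique hx⟩

theorem one_sub_sq_mul_norm_sq_add_norm_sq_le_two_inner {X : Type*} [NormedAddCommGroup X]
    [InnerProductSpace ℝ X] {L : ℝ} {u w : X} (h : ‖u - w‖ ≤ L * ‖u‖) :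
    (1 - L ^ 2) * ‖u‖ ^ 2 + ‖w‖ ^ 2 ≤ 2 * ⟪w, u⟫ := by
  have hsq : ‖u - w‖ ^ 2 ≤ (L * ‖u‖) ^ 2 := pow_le_pow_left₀ (norm_nonneg _) h 2
  rw [norm_sub_sq_real, real_inner_comm] at hsq
  linarith

/-- **Inverse of an iResNet satisfies the monotonicity–coercivity condition.**
If `f : X → X` is Lipschitz with constant `L < 1`, then the residual map
`φ = Id - f` is bijective and its inverse `ψ` satisfies
`(1 - L²)‖ψ z₁ - ψ z₂‖² + ‖z₁ - z₂‖² ≤ 2⟪z₁ - z₂, ψ z₁ - ψ z₂⟫` for all `z₁ z₂`. -/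
theorem iResNet_inverse_monotone
    {X : Type*} [NormedAddCommGroup X] [InnerProductSpace ℝ X] [FiniteDimensional ℝ X]
    (L : ℝ) (hL0 : 0 ≤ L) (hL1 : L < 1)
    (f : X → X) (hf : ∀ a b : X, ‖f a - f b‖ ≤ L * ‖a - b‖) :
    Function.Bijective (fun x : X => x - f x) ∧
      ∀ z₁ z₂ : X,
        (1 - L ^ 2) *
            ‖Function.invFun (fun x : X => x - f x) z₁ -
              Function.invFun (fun x : X => x - f x) z₂‖ ^ 2 +
          ‖z₁ - z₂‖ ^ 2 ≤
        2 * ⟪z₁ - z₂,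
              Function.invFun (fun x : X => x - f x) z₁ -
                Function.invFun (fun x : X => x - f x) z₂⟫ := by
  have hcontr : ContractingWith ⟨L, hL0⟩ f :=
    ⟨hL1, LipschitzWith.of_dist_le_mul fun a b => by
      rw [dist_eq_norm, dist_eq_norm]; exact hf a b⟩
  have hbij := hcontr.bijective_id_sub
  refine ⟨hbij, fun z₁ z₂ => one_sub_sq_mul_norm_sq_add_norm_sq_le_two_inner ?_⟩
  set ψ := Function.invFun fun x : X => x - f x
  have hψ : ∀ z, ψ z - f (ψ z) = z := Function.rightInverse_invFun hbij.2
  calc ‖ψ z₁ - ψ z₂ - (z₁ - z₂)‖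
      = ‖ψ z₁ - ψ z₂ - ((ψ z₁ - f (ψ z₁)) - (ψ z₂ - f (ψ z₂)))‖ := by rw [hψ, hψ]
    _ = ‖f (ψ z₁) - f (ψ z₂)‖ := by congr 1; abel
    _ ≤ L * ‖ψ z₁ - ψ z₂‖ := hf _ _
end

section
/- Let X be a finite-dimensional real inner product space, 0 ≤ L < 1, and let ψ : X → X satisfy, for all z₁, z₂ ∈ X, the inequality (1 − L²)·‖ψ(z₁) − ψ(z₂)‖² + ‖z₁ − z₂‖² ≤ 2·⟨z₁ − z₂, ψ(z₁) − ψ(z₂)⟩. Fix x ∈ X and z₀ ∈ X, and define recursively z_{k+1} = z_k + (1 − L²)·(x − ψ(z_k)). Then for every k ∈ ℕ it holds that ‖x − ψ(z_k)‖ ≤ Lᵏ · ‖x − ψ(z₀)‖; in particular ψ(z_k) → x as k → ∞. -/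
open RealInnerProductSpace Filter

/-- **Fixed-point iteration converges for maps satisfying the
monotonicity–coercivity condition.** If `ψ : X → X` satisfies
`(1 - L²)‖ψ z₁ - ψ z₂‖² + ‖z₁ - z₂‖² ≤ 2⟪z₁ - z₂, ψ z₁ - ψ z₂⟫` and the sequence
`z` is defined recursively by `z_{k+1} = z_k + (1 - L²)(x - ψ(z_k))`, then
`‖x - ψ(z_k)‖ ≤ Lᵏ‖x - ψ(z₀)‖` for every `k`, and `ψ(z_k) → x`. -/
theorem iteration_convergence
    {X : Type*} [NormedAddCommGroup X] [InnerProductSpace ℝ X] [FiniteDimensional ℝ X]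
    (L : ℝ) (hL0 : 0 ≤ L) (hL1 : L < 1)
    (ψ : X → X)
    (hψ : ∀ z₁ z₂ : X,
      (1 - L ^ 2) * ‖ψ z₁ - ψ z₂‖ ^ 2 + ‖z₁ - z₂‖ ^ 2 ≤ 2 * ⟪z₁ - z₂, ψ z₁ - ψ z₂⟫)
    (x : X) (z : ℕ → X)
    (hz : ∀ k : ℕ, z (k + 1) = z k + (1 - L ^ 2) • (x - ψ (z k))) :
    (∀ k : ℕ, ‖x - ψ (z k)‖ ≤ L ^ k * ‖x - ψ (z 0)‖) ∧
      Tendsto (fun k => ψ (z k)) atTop (nhds x) := by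
  have hμ : (0:ℝ) < 1 - L ^ 2 := by nlinarith
  have step : ∀ k : ℕ, ‖x - ψ (z (k + 1))‖ ≤ L * ‖x - ψ (z k)‖ := by
    intro k
    set a := x - ψ (z k) with ha
    set b := x - ψ (z (k + 1)) with hb
    have hd : z (k + 1) - z k = (1 - L ^ 2) • a := by rw [hz k]; abel
    have hw : ψ (z (k + 1)) - ψ (z k) = a - b := by rw [ha, hb]; abel
    have h := hψ (z (k + 1)) (z k)
    rw [hd, hw, norm_smul, real_inner_smul_left] at h
    have hab : ⟪a, a - b⟫ = ‖a‖ ^ 2 - ⟪a, b⟫ := by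
      rw [inner_sub_right, real_inner_self_eq_norm_sq]
    have hnab : ‖a - b‖ ^ 2 = ‖a‖ ^ 2 - 2 * ⟪a, b⟫ + ‖b‖ ^ 2 := by
      rw [norm_sub_sq_real]
    rw [hab, hnab] at h
    have hsq : ‖b‖ ^ 2 ≤ (L * ‖a‖) ^ 2 := by
      simp only [Real.norm_eq_abs, abs_of_pos hμ] at h
      nlinarith [norm_nonneg a]
    exact (pow_le_pow_iff_left₀ (norm_nonneg b) (by positivity) two_ne_zero).mp hsq
  have bound : ∀ k : ℕ, ‖x - ψ (z k)‖ ≤ L ^ k * ‖x - ψ (z 0)‖ := by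
    intro k
    induction k with
    | zero => simp
    | succ n ih =>
        calc ‖x - ψ (z (n + 1))‖ ≤ L * ‖x - ψ (z n)‖ := step n
        _ ≤ L * (L ^ n * ‖x - ψ (z 0)‖) := by
            exact mul_le_mul_of_nonneg_left ih hL0
        _ = L ^ (n + 1) * ‖x - ψ (z 0)‖ := by ring
  refine ⟨bound, ?_⟩
  have h0 : Tendsto (fun k : ℕ => L ^ k * ‖x - ψ (z 0)‖) atTop (nhds 0) := by
    simpa using (tendsto_pow_atTop_nhds_zero_of_lt_one hL0 hL1).mul_const ‖x - ψ (z 0)‖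
  have hn : Tendsto (fun k : ℕ => ‖ψ (z k) - x‖) atTop (nhds 0) := by
    refine squeeze_zero (fun k => norm_nonneg _) (fun k => ?_) h0
    rw [norm_sub_rev]; exact bound k
  exact tendsto_iff_norm_sub_tendsto_zero.mpr hn
end

section
/- Let X be a finite-dimensional real inner product space, 0 ≤ L < 1, and let ψ : X → X satisfy, for all z₁, z₂ ∈ X, the inequality (1 − L²)·‖ψ(z₁) − ψ(z₂)‖² + ‖z₁ − z₂‖² ≤ 2·⟨z₁ − z₂, ψ(z₁) − ψ(z₂)⟩. Then ψ is bijective, and the map f := Id − ψ⁻¹ is Lipschitz continuous with Lipschitz constant at most L; equivalently, ψ⁻¹ = Id − f is an invertible residual network with residual function of Lipschitz constant at most L. -/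
open RealInnerProductSpace

/-- **Maps satisfying the monotonicity–coercivity condition are inverses of
iResNets.** If `ψ : X → X` satisfies
`(1 - L²)‖ψ z₁ - ψ z₂‖² + ‖z₁ - z₂‖² ≤ 2⟪z₁ - z₂, ψ z₁ - ψ z₂⟫` for all `z₁ z₂`,
then `ψ` is bijective and `f := Id - ψ⁻¹` is Lipschitz with constant at most `L`,
i.e. `ψ⁻¹ = Id - f` is an iResNet with residual of Lipschitz constant at most `L`. -/
theorem monotone_is_iResNet_inverse
    {X : Type*} [NormedAddCommGroup X] [InnerProductSpace ℝ X] [FiniteDimensional ℝ X]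
    (L : ℝ) (hL0 : 0 ≤ L) (hL1 : L < 1)
    (ψ : X → X)
    (hψ : ∀ z₁ z₂ : X,
      (1 - L ^ 2) * ‖ψ z₁ - ψ z₂‖ ^ 2 + ‖z₁ - z₂‖ ^ 2 ≤ 2 * ⟪z₁ - z₂, ψ z₁ - ψ z₂⟫) :
    Function.Bijective ψ ∧
      ∀ a b : X,
        ‖(a - Function.invFun ψ a) - (b - Function.invFun ψ b)‖ ≤ L * ‖a - b‖ := by
  -- Key pointwise estimate: ‖(z₁ - z₂) - (ψ z₁ - ψ z₂)‖ ≤ L * ‖ψ z₁ - ψ z₂‖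
  have key : ∀ z₁ z₂ : X,
      ‖(z₁ - z₂) - (ψ z₁ - ψ z₂)‖ ≤ L * ‖ψ z₁ - ψ z₂‖ := by
    intro z₁ z₂
    have h := hψ z₁ z₂
    have hsq : ‖(z₁ - z₂) - (ψ z₁ - ψ z₂)‖ ^ 2 ≤ (L * ‖ψ z₁ - ψ z₂‖) ^ 2 := by
      have hexp := @norm_sub_sq_real X _ _ (z₁ - z₂) (ψ z₁ - ψ z₂)
      nlinarith [hexp, h]
    have h1 : (0:ℝ) ≤ ‖(z₁ - z₂) - (ψ z₁ - ψ z₂)‖ := norm_nonneg _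
    have h2 : (0:ℝ) ≤ L * ‖ψ z₁ - ψ z₂‖ := mul_nonneg hL0 (norm_nonneg _)
    nlinarith [hsq, h1, h2]
  -- Injectivity
  have hinj : Function.Injective ψ := by
    intro z₁ z₂ h
    have := key z₁ z₂
    rw [h, sub_self] at this
    simp only [norm_zero, mul_zero, sub_zero] at this
    have := le_antisymm this (norm_nonneg _)
    exact sub_eq_zero.mp (norm_eq_zero.mp this)
  -- Surjectivity via Banach fixed point
  have hsurj : Function.Surjective ψ := by
    intro y
    set t : ℝ := (1 - L) ^ 2 / 2 with ht_def
    have hL' : (0:ℝ) < 1 - L := by linarith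
    have ht0 : 0 < t := by positivity
    have ht1 : t ≤ 1 - L ^ 2 := by nlinarith
    have htlt : t < 1 := by nlinarith
    set T : X → X := fun z => z + t • (y - ψ z) with hT_def
    -- contraction estimate
    have hdist : ∀ z₁ z₂ : X, dist (T z₁) (T z₂) ≤ Real.sqrt (1 - t) * dist z₁ z₂ := by
      intro z₁ z₂
      have hTsub : T z₁ - T z₂ = (z₁ - z₂) - t • (ψ z₁ - ψ z₂) := by
        simp only [hT_def, smul_sub]
        abel
      have h := hψ z₁ z₂
      have hexp := @norm_sub_sq_real X _ _ (z₁ - z₂) (t • (ψ z₁ - ψ z₂))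
      rw [real_inner_smul_right, norm_smul, Real.norm_eq_abs, abs_of_pos ht0] at hexp
      have hsq : ‖(z₁ - z₂) - t • (ψ z₁ - ψ z₂)‖ ^ 2 ≤ (1 - t) * ‖z₁ - z₂‖ ^ 2 := by
        nlinarith [hexp, mul_le_mul_of_nonneg_left h ht0.le,
          mul_le_mul_of_nonneg_left ht1 ht0.le, sq_nonneg ‖ψ z₁ - ψ z₂‖,
          sq_nonneg ‖z₁ - z₂‖]
      have h1t : (0:ℝ) ≤ 1 - t := by linarith
      have := Real.sqrt_le_sqrt hsq
      rw [Real.sqrt_sq (norm_nonneg _), Real.sqrt_mul h1t, Real.sqrt_sq (norm_nonneg _)] at this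
      calc dist (T z₁) (T z₂) = ‖T z₁ - T z₂‖ := dist_eq_norm _ _
        _ = ‖(z₁ - z₂) - t • (ψ z₁ - ψ z₂)‖ := by rw [hTsub]
        _ ≤ Real.sqrt (1 - t) * ‖z₁ - z₂‖ := this
        _ = Real.sqrt (1 - t) * dist z₁ z₂ := by rw [dist_eq_norm]
    have hc1 : Real.sqrt (1 - t) < 1 := by
      have := Real.sqrt_lt_sqrt (by linarith : (0:ℝ) ≤ 1 - t) (by linarith : 1 - t < 1)
      simpa using this
    have hcontr : ContractingWith (Real.toNNReal (Real.sqrt (1 - t))) T := by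
      constructor
      · simpa [Real.toNNReal_lt_one] using hc1
      · apply LipschitzWith.of_dist_le_mul
        intro z₁ z₂
        rw [Real.coe_toNNReal _ (Real.sqrt_nonneg _)]
        exact hdist z₁ z₂
    have : Nonempty X := ⟨0⟩
    set z := hcontr.fixedPoint T with hz_def
    have hz := hcontr.fixedPoint_isFixedPt
    refine ⟨z, ?_⟩
    have : z + t • (y - ψ z) = z := hz
    have h0 : t • (y - ψ z) = 0 := by
      have := congrArg (· - z) this
      simpa [add_sub_cancel_left] using this
    have := smul_eq_zero.mp h0
    rcases this with h | h
    · exact absurd h (ne_of_gt ht0)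
    · exact (sub_eq_zero.mp h).symm
  refine ⟨⟨hinj, hsurj⟩, ?_⟩
  intro a b
  have ha : ψ (Function.invFun ψ a) = a := Function.rightInverse_invFun hsurj a
  have hb : ψ (Function.invFun ψ b) = b := Function.rightInverse_invFun hsurj b
  have := key (Function.invFun ψ a) (Function.invFun ψ b)
  rw [ha, hb] at this
  calc ‖(a - Function.invFun ψ a) - (b - Function.invFun ψ b)‖
      = ‖(Function.invFun ψ a - Function.invFun ψ b) - (a - b)‖ := by
        rw [← norm_neg]; congr 1; abel
    _ ≤ L * ‖a - b‖ := this
end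

section
/- Let X be a finite-dimensional real inner product space, 0 ≤ L < 1, and ψ : X → X. Then ψ satisfies (1 − L²)·‖ψ(z₁) − ψ(z₂)‖² + ‖z₁ − z₂‖² ≤ 2·⟨z₁ − z₂, ψ(z₁) − ψ(z₂)⟩ for all z₁, z₂ ∈ X if and only if the map g := Id − (1 − L²)·ψ is Lipschitz continuous with Lipschitz constant at most L. In particular, any such ψ can be written as ψ = (1/(1 − L²))·(Id − g) with Lip(g) ≤ L, i.e. as a scaled invertible residual network. -/
open RealInnerProductSpace

/-- **Inverses of iResNets are scaled iResNets.** For `ψ : X → X` and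
`0 ≤ L < 1`, the monotonicity–coercivity condition holds if and only if
`g := Id - (1 - L²)ψ` is Lipschitz with constant at most `L`; in that case
`ψ = (1/(1 - L²))(Id - g)`, a scaled iResNet. -/
theorem inverse_iResNet_is_scaled_iResNet
    {X : Type*} [NormedAddCommGroup X] [InnerProductSpace ℝ X] [FiniteDimensional ℝ X]
    (L : ℝ) (hL0 : 0 ≤ L) (hL1 : L < 1) (ψ : X → X) :
    ((∀ z₁ z₂ : X,
        (1 - L ^ 2) * ‖ψ z₁ - ψ z₂‖ ^ 2 + ‖z₁ - z₂‖ ^ 2 ≤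
          2 * ⟪z₁ - z₂, ψ z₁ - ψ z₂⟫) ↔
      (∀ a b : X,
        ‖(a - (1 - L ^ 2) • ψ a) - (b - (1 - L ^ 2) • ψ b)‖ ≤ L * ‖a - b‖)) ∧
    (∀ z : X, ψ z = (1 / (1 - L ^ 2)) • (z - (z - (1 - L ^ 2) • ψ z))) := by
  have hc : (0:ℝ) < 1 - L ^ 2 := by nlinarith
  constructor
  · have key : ∀ a b : X,
        (a - (1 - L ^ 2) • ψ a) - (b - (1 - L ^ 2) • ψ b)
          = (a - b) - (1 - L ^ 2) • (ψ a - ψ b) := by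
      intro a b; rw [smul_sub]; abel
    have expand : ∀ a b : X,
        ‖(a - b) - (1 - L ^ 2) • (ψ a - ψ b)‖ ^ 2
          = ‖a - b‖ ^ 2 - 2 * ((1 - L ^ 2) * ⟪a - b, ψ a - ψ b⟫)
            + (1 - L ^ 2) ^ 2 * ‖ψ a - ψ b‖ ^ 2 := by
      intro a b
      rw [norm_sub_sq_real, real_inner_smul_right, norm_smul]
      simp [abs_of_pos hc, mul_pow]
    constructor
    · intro h a b
      have h2 : ‖(a - b) - (1 - L ^ 2) • (ψ a - ψ b)‖ ^ 2 ≤ (L * ‖a - b‖) ^ 2 := by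
        rw [expand a b]
        have := h a b
        nlinarith [norm_nonneg (a - b), norm_nonneg (ψ a - ψ b)]
      rw [key a b]
      have hL' : 0 ≤ L * ‖a - b‖ := by positivity
      exact (pow_le_pow_iff_left₀ (norm_nonneg _) hL' two_ne_zero).mp h2
    · intro h z₁ z₂
      have h2 := h z₁ z₂
      rw [key z₁ z₂] at h2
      have h3 : ‖(z₁ - z₂) - (1 - L ^ 2) • (ψ z₁ - ψ z₂)‖ ^ 2 ≤ (L * ‖z₁ - z₂‖) ^ 2 :=
        pow_le_pow_left₀ (norm_nonneg _) h2 2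
      rw [expand z₁ z₂] at h3
      nlinarith [norm_nonneg (z₁ - z₂), norm_nonneg (ψ z₁ - ψ z₂)]
  · intro z
    rw [sub_sub_cancel, smul_smul, one_div, inv_mul_cancel₀ hc.ne', one_smul]
end

section
/- Let p be a probability measure on ℝ with finite first and second moments, mean μ and variance Var(p), let σ² ∈ (0, 1], and let 0 ≤ L < 1 − σ². Among all affine functions f(x) = m·x + b with m ∈ [−L, L] and b ∈ ℝ, the functional F(f) = ∫ |(1 − σ²)·x − f(x)|² dp(x) is minimized by f*(x) = L·x + (1 − σ² − L)·μ; that is, for all such (m, b), ∫ |(1 − σ² − m)·x − b|² dp(x) ≥ (1 − σ² − L)²·Var(p). Moreover, if Var(p) > 0, then (m, b) = (L, (1 − σ² − L)·μ) is the unique minimizing pair. -/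
open MeasureTheory ProbabilityTheory

/-!
Expanding the square around the mean splits the loss of `x ↦ c x - b` into the variance term
`c² Var(p)` and the squared bias `(c μ - b)²`. With `c = 1 - s - m` and `|m| ≤ L < 1 - s` one
has `c ≥ 1 - s - L > 0`, so the variance term is smallest at `m = L` and the bias vanishes
exactly at `b = c μ`; when `Var(p) > 0` both choices are forced.
-/

section BiasVariance

variable {Ω : Type*} {mΩ : MeasurableSpace Ω} {P : Measure Ω} [IsProbabilityMeasure P]
  {X : Ω → ℝ}

lemma integral_sq_eq_variance_add_sq (hX : MemLp X 2 P) :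
    ∫ ω, X ω ^ 2 ∂P = Var[X; P] + P[X] ^ 2 := by
  rw [variance_eq_sub hX]
  simp only [Pi.pow_apply]
  ring

lemma integral_sq_mul_sub_eq (hX : MemLp X 2 P) (c b : ℝ) :
    ∫ ω, (c * X ω - b) ^ 2 ∂P = c ^ 2 * Var[X; P] + (c * P[X] - b) ^ 2 := by
  have hcX : MemLp (fun ω => c * X ω) 2 P := hX.const_mul c
  rw [integral_sq_eq_variance_add_sq (X := fun ω => c * X ω - b) (hcX.sub (memLp_const b)),
    variance_sub_const hcX.aestronglyMeasurable, variance_const_mul,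
    integral_sub (hcX.integrable one_le_two) (integrable_const b), integral_const_mul,
    integral_const]
  simp

end BiasVariance

lemma sq_mul_le_sq_mul_add_sq {c d V : ℝ} (e : ℝ) (hd : 0 ≤ d) (hdc : d ≤ c)
    (hV : 0 ≤ V) :
    d ^ 2 * V ≤ c ^ 2 * V + e ^ 2 := by
  have : d ^ 2 ≤ c ^ 2 := pow_le_pow_left₀ hd hdc 2
  nlinarith [sq_nonneg e]

lemma eq_and_eq_zero_of_sq_mul_add_sq_eq {c d V e : ℝ} (hd : 0 ≤ d) (hdc : d ≤ c) (hV : 0 < V)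
    (h : c ^ 2 * V + e ^ 2 = d ^ 2 * V) : c = d ∧ e = 0 := by
  have hsq : d ^ 2 ≤ c ^ 2 := pow_le_pow_left₀ hd hdc 2
  have hc : c ^ 2 = d ^ 2 := by nlinarith [sq_nonneg e]
  refine ⟨(pow_left_inj₀ (hd.trans hdc) hd two_ne_zero).mp hc, ?_⟩
  rw [hc] at h
  exact pow_eq_zero_iff two_ne_zero |>.mp (by linarith)

theorem approx_training_affine_minimizer_general
    (p : Measure ℝ) [IsProbabilityMeasure p]
    (h2 : Integrable (fun x => x ^ 2) p)
    (s L : ℝ) (hL : L < 1 - s) :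
    (∀ m b : ℝ, |m| ≤ L →
        (1 - s - L) ^ 2 * (∫ x, (x - ∫ y, y ∂p) ^ 2 ∂p) ≤
          ∫ x, ((1 - s - m) * x - b) ^ 2 ∂p) ∧
      (0 < ∫ x, (x - ∫ y, y ∂p) ^ 2 ∂p →
        ∀ m b : ℝ, |m| ≤ L →
          (∫ x, ((1 - s - m) * x - b) ^ 2 ∂p) =
            (1 - s - L) ^ 2 * (∫ x, (x - ∫ y, y ∂p) ^ 2 ∂p) →
          m = L ∧ b = (1 - s - L) * ∫ y, y ∂p) := by
  have hX : MemLp id 2 p := (memLp_two_iff_integrable_sq aestronglyMeasurable_id).2 h2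
  have hV : ∫ x, (x - ∫ y, y ∂p) ^ 2 ∂p = Var[id; p] :=
    (variance_eq_integral aemeasurable_id).symm
  have hloss (m b : ℝ) : ∫ x, ((1 - s - m) * x - b) ^ 2 ∂p =
      (1 - s - m) ^ 2 * Var[id; p] + ((1 - s - m) * ∫ y, y ∂p - b) ^ 2 :=
    integral_sq_mul_sub_eq hX _ _
  have hd : 0 ≤ 1 - s - L := by linarith
  have hdc {m : ℝ} (hm : |m| ≤ L) : 1 - s - L ≤ 1 - s - m := by linarith [(abs_le.mp hm).2]
  rw [hV]
  refine ⟨fun m b hm => ?_, fun hVpos m b hm heq => ?_⟩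
  · rw [hloss]
    exact sq_mul_le_sq_mul_add_sq _ hd (hdc hm) (variance_nonneg _ _)
  · rw [hloss] at heq
    obtain ⟨hc, hbias⟩ := eq_and_eq_zero_of_sq_mul_add_sq_eq hd (hdc hm) hVpos heq
    rw [hc] at hbias
    exact ⟨by linarith, by linarith⟩

/-- **Approximation training over affine functions (Lemma 3.2).** Let `p` be a
probability measure on `ℝ` with finite first and second moments, mean `μ` and
variance `V`, let `σ² = s ∈ (0,1]` and `0 ≤ L < 1 - s`. Among affine functions
`f(x) = m x + b` with `|m| ≤ L`, the approximation loss
`∫ |(1 - s)x - (m x + b)|² dp` is minimized by `m = L`, `b = (1 - s - L)μ`, with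
optimal value `(1 - s - L)² V`; and if `V > 0` this minimizer is unique. -/
theorem approx_training_affine_minimizer
    (p : Measure ℝ) [IsProbabilityMeasure p]
    (h1 : Integrable (fun x => x) p) (h2 : Integrable (fun x => x ^ 2) p)
    (s L : ℝ) (hs0 : 0 < s) (hs1 : s ≤ 1) (hL0 : 0 ≤ L) (hL : L < 1 - s) :
    (∀ m b : ℝ, |m| ≤ L →
        (1 - s - L) ^ 2 * (∫ x, (x - ∫ y, y ∂p) ^ 2 ∂p) ≤
          ∫ x, ((1 - s - m) * x - b) ^ 2 ∂p) ∧
      (0 < ∫ x, (x - ∫ y, y ∂p) ^ 2 ∂p →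
        ∀ m b : ℝ, |m| ≤ L →
          (∫ x, ((1 - s - m) * x - b) ^ 2 ∂p) =
            (1 - s - L) ^ 2 * (∫ x, (x - ∫ y, y ∂p) ^ 2 ∂p) →
          m = L ∧ b = (1 - s - L) * ∫ y, y ∂p) :=
  approx_training_affine_minimizer_general p h2 s L hL
end

section
/- Let p be a probability measure on ℝ with finite first and second moments and mean μ, let σ² ∈ (0, 1], and let 0 ≤ L < 1. Define f*(x) = (1 − σ²)·x if 1 − σ² ≤ L, and f*(x) = L·x + (1 − σ² − L)·μ if 1 − σ² > L. Then f* minimizes F(f) = ∫ |(1 − σ²)·x − f(x)|² dp(x) among all Lipschitz functions f : ℝ → ℝ with Lipschitz constant at most L, i.e. F(f) ≥ F(f*) for every such f. Moreover, any minimizer coincides with f* almost everywhere on the support of p, and in the case 1 − σ² > L any minimizer coincides with f* on the convex hull of the support of p. -/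
open MeasureTheory

/-- The minimizer of the approximation training over Lipschitz functions with
constant at most `L`: `f*(x) = (1 - s)x` if `1 - s ≤ L`, and
`f*(x) = Lx + (1 - s - L)μ` otherwise (`s = σ²`, `μ` the prior mean). -/
noncomputable def approxMinimizer (s L μ : ℝ) : ℝ → ℝ := fun x =>
  if 1 - s ≤ L then (1 - s) * x else L * x + (1 - s - L) * μ

/-- The (topological) support of a measure on `ℝ`: points all of whose
neighbourhoods have nonzero measure. -/
def measSupport (p : Measure ℝ) : Set ℝ := {x | ∀ U ∈ nhds x, p U ≠ 0}

/-!
Write `c = 1 - s`, `a = c - L` and `μ` for the mean of `p`. For `L`-Lipschitz `f` the residual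
`g x = c x - f x` is strongly monotone with modulus `a`, so its covariance with `x` is at least
`a Var p`. When `a > 0` the residual of `f*` is `a (x - μ)`, and expanding `∫ (g - a (x - μ))²`
gives `F f* + ‖f - f*‖² ≤ F f` in `L²(p)`; when `a ≤ 0`, `F f* = 0` and this is an equality.
So `f*` is optimal and any minimizer equals it `p`-a.e., hence, both being continuous, on the
support of `p`. An `L`-Lipschitz function meeting the slope-`L` line `f*` at two points follows
it in between, which extends the equality to the convex hull.
-/

section Lipschitz

variable {L : ℝ} {f : ℝ → ℝ}

lemma lipschitzWith_of_abs_sub_le (hf : ∀ a b : ℝ, |f a - f b| ≤ L * |a - b|) :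
    LipschitzWith L.toNNReal f :=
  LipschitzWith.of_dist_le' fun a b => by simpa only [Real.dist_eq] using hf a b

lemma memLp_of_abs_sub_le {p : Measure ℝ} [IsFiniteMeasure p] {q : ENNReal}
    (hX : MemLp (fun x => x) q p) (hf : ∀ a b : ℝ, |f a - f b| ≤ L * |a - b|) :
    MemLp f q p := by
  have hc := (lipschitzWith_of_abs_sub_le hf).continuous
  have hsub : MemLp (fun x => f x - f 0) q p :=
    hX.of_le_mul (hc.sub continuous_const).aestronglyMeasurable <|
      .of_forall fun x => by
        simpa only [Real.norm_eq_abs, sub_zero] using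
          (hf x 0).trans (mul_le_mul_of_nonneg_right (le_abs_self L) (abs_nonneg _))
  convert hsub.add (memLp_const (f 0)) using 1
  ext x
  exact (sub_add_cancel _ _).symm

lemma sub_mul_sub_le_of_abs_sub_le (hf : ∀ a b : ℝ, |f a - f b| ≤ L * |a - b|) (x y : ℝ) :
    (x - y) * (f x - f y) ≤ L * (x - y) ^ 2 :=
  calc (x - y) * (f x - f y) ≤ |x - y| * |f x - f y| := by
        rw [← abs_mul]; exact le_abs_self _
    _ ≤ |x - y| * (L * |x - y|) := mul_le_mul_of_nonneg_left (hf x y) (abs_nonneg _)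
    _ = L * (x - y) ^ 2 := by rw [← sq_abs (x - y)]; ring

/-- The slope-`L` line through two points of the graph bounds `f` from above to the right of the
first point and from below to the left of the second. -/
lemma convex_setOf_eq_mul_add (hf : ∀ a b : ℝ, |f a - f b| ≤ L * |a - b|) (b : ℝ) :
    Convex ℝ {x | f x = L * x + b} := by
  refine convex_iff_ordConnected.2 ⟨fun u hu v hv z hz => ?_⟩
  simp only [Set.mem_ofPred_eq] at hu hv ⊢
  have hzu := (le_abs_self _).trans (hf z u)
  have hvz := (le_abs_self _).trans (hf v z)
  rw [abs_of_nonneg (sub_nonneg.2 hz.1)] at hzu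
  rw [abs_of_nonneg (sub_nonneg.2 hz.2)] at hvz
  linarith

end Lipschitz

section SecondMoment

variable {α : Type*} [MeasurableSpace α] {p : Measure α}

lemma integral_sq_sub_mul_add_le {u v : α → ℝ} {a : ℝ} (hu : MemLp u 2 p) (hv : MemLp v 2 p)
    (ha : 0 ≤ a) (huv : a * ∫ x, v x ^ 2 ∂p ≤ ∫ x, u x * v x ∂p) :
    ∫ x, (u x - a * v x) ^ 2 ∂p + a ^ 2 * ∫ x, v x ^ 2 ∂p ≤ ∫ x, u x ^ 2 ∂p := by
  have hexpand : ∫ x, (u x - a * v x) ^ 2 ∂p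
      = ∫ x, u x ^ 2 ∂p - 2 * a * ∫ x, u x * v x ∂p + a ^ 2 * ∫ x, v x ^ 2 ∂p := by
    have huv_int : Integrable (fun x => u x * v x) p := hu.integrable_mul hv
    have hdiff : Integrable (fun x => u x ^ 2 - 2 * a * (u x * v x)) p :=
      hu.integrable_sq.sub (huv_int.const_mul _)
    calc ∫ x, (u x - a * v x) ^ 2 ∂p
        = ∫ x, (u x ^ 2 - 2 * a * (u x * v x)) + a ^ 2 * v x ^ 2 ∂p := by
          congr 1 with x; ring
      _ = _ := by
          rw [integral_add hdiff (hv.integrable_sq.const_mul _),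
            integral_sub hu.integrable_sq (huv_int.const_mul _), integral_const_mul,
            integral_const_mul]
  rw [hexpand]
  nlinarith

lemma ae_eq_of_integral_sq_sub_le_zero {f g : α → ℝ} (hf : MemLp f 2 p) (hg : MemLp g 2 p)
    (h : ∫ x, (f x - g x) ^ 2 ∂p ≤ 0) : f =ᵐ[p] g := by
  have hzero := (integral_eq_zero_iff_of_nonneg (fun x => sq_nonneg (f x - g x))
    (hf.sub hg).integrable_sq).1 (h.antisymm (integral_nonneg fun x => sq_nonneg _))
  filter_upwards [hzero] with x hx
  exact sub_eq_zero.1 (pow_eq_zero_iff two_ne_zero |>.1 hx)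

end SecondMoment

lemma mul_integral_sq_sub_mean_le_integral_mul {p : Measure ℝ} [IsProbabilityMeasure p]
    {g : ℝ → ℝ} {a : ℝ} (hX : MemLp (fun x => x) 2 p) (hg : MemLp g 2 p)
    (hmono : ∀ x y, a * (x - y) ^ 2 ≤ (x - y) * (g x - g y)) :
    a * ∫ x, (x - ∫ y, y ∂p) ^ 2 ∂p ≤ ∫ x, g x * (x - ∫ y, y ∂p) ∂p := by
  set μ := ∫ y, y ∂p
  have hv : MemLp (fun x => x - μ) 2 p := hX.sub (memLp_const μ)
  have hmean : ∫ x, (x - μ) ∂p = 0 := by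
    rw [integral_sub (hX.integrable one_le_two) (integrable_const μ), integral_const,
      probReal_univ, one_smul, sub_self]
  have hcentered : ∫ x, g x * (x - μ) ∂p = ∫ x, (x - μ) * (g x - g μ) ∂p := by
    have hgv : Integrable (fun x => g x * (x - μ)) p := hg.integrable_mul hv
    calc ∫ x, g x * (x - μ) ∂p = ∫ x, g x * (x - μ) - g μ * (x - μ) ∂p := by
          rw [integral_sub hgv ((hv.integrable one_le_two).const_mul _), integral_const_mul,
            hmean, mul_zero, sub_zero]
      _ = ∫ x, (x - μ) * (g x - g μ) ∂p := by
          congr 1 with x; ring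
  rw [hcentered, ← integral_const_mul]
  refine integral_mono (hv.integrable_sq.const_mul a) ?_ fun x => hmono x μ
  exact hv.integrable_mul (hg.sub (memLp_const (g μ)))

section Minimizer

variable {s L μ : ℝ}

lemma approxMinimizer_of_le (h : 1 - s ≤ L) : approxMinimizer s L μ = fun x => (1 - s) * x :=
  funext fun _ => if_pos h

lemma approxMinimizer_of_lt (h : L < 1 - s) :
    approxMinimizer s L μ = fun x => L * x + (1 - s - L) * μ :=
  funext fun _ => if_neg h.not_ge

lemma memLp_approxMinimizer {p : Measure ℝ} [IsFiniteMeasure p] {q : ENNReal}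
    (hX : MemLp (fun x => x) q p) : MemLp (approxMinimizer s L μ) q p := by
  rcases le_or_gt (1 - s) L with h | h
  · rw [approxMinimizer_of_le h]; exact hX.const_mul _
  · rw [approxMinimizer_of_lt h]; exact (hX.const_mul _).add (memLp_const _)

theorem integral_sq_approxMinimizer_add_le {p : Measure ℝ} [IsProbabilityMeasure p] {f : ℝ → ℝ}
    (hX : MemLp (fun x => x) 2 p) (hf : ∀ a b : ℝ, |f a - f b| ≤ L * |a - b|) :
    ∫ x, ((1 - s) * x - approxMinimizer s L (∫ y, y ∂p) x) ^ 2 ∂p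
        + ∫ x, (f x - approxMinimizer s L (∫ y, y ∂p) x) ^ 2 ∂p
      ≤ ∫ x, ((1 - s) * x - f x) ^ 2 ∂p := by
  rcases le_or_gt (1 - s) L with h | h
  · rw [approxMinimizer_of_le h]
    simp only [sub_self, zero_pow two_ne_zero, integral_zero, zero_add]
    exact (integral_congr_ae (.of_forall fun x => by ring)).le
  · set μ := ∫ y, y ∂p
    have hg : MemLp (fun x => (1 - s) * x - f x) 2 p :=
      (hX.const_mul _).sub (memLp_of_abs_sub_le hX hf)
    have hmono : ∀ x y, (1 - s - L) * (x - y) ^ 2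
        ≤ (x - y) * ((1 - s) * x - f x - ((1 - s) * y - f y)) := fun x y => by
      nlinarith [sub_mul_sub_le_of_abs_sub_le hf x y]
    have hv : MemLp (fun x => x - μ) 2 p := hX.sub (memLp_const μ)
    have key := integral_sq_sub_mul_add_le hg hv (sub_pos.2 h).le
      (mul_integral_sq_sub_mean_le_integral_mul hX hg hmono)
    clear_value μ
    have hopt : ∫ x, ((1 - s) * x - (L * x + (1 - s - L) * μ)) ^ 2 ∂p
        = (1 - s - L) ^ 2 * ∫ x, (x - μ) ^ 2 ∂p := by
      rw [← integral_const_mul]; congr 1 with x; ring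
    rw [approxMinimizer_of_lt h, hopt, add_comm]
    convert key using 3
    funext x
    ring

end Minimizer

lemma measSupport_subset_setOf_eq {β : Type*} [TopologicalSpace β] [T2Space β] {p : Measure ℝ}
    {f g : ℝ → β} (hf : Continuous f) (hg : Continuous g) (h : f =ᵐ[p] g) :
    measSupport p ⊆ {x | f x = g x} :=
  fun _ hx => by_contra fun hne => hx _ ((isOpen_ne_fun hf hg).mem_nhds hne) (ae_iff.1 h)

theorem approx_training_lipschitz_minimizer_general
    (p : Measure ℝ) [IsProbabilityMeasure p]
    (h2 : Integrable (fun x => x ^ 2) p)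
    (s L : ℝ) :
    (∀ f : ℝ → ℝ, (∀ a b : ℝ, |f a - f b| ≤ L * |a - b|) →
        ∫ x, ((1 - s) * x - approxMinimizer s L (∫ y, y ∂p) x) ^ 2 ∂p ≤
          ∫ x, ((1 - s) * x - f x) ^ 2 ∂p) ∧
    (∀ f : ℝ → ℝ, (∀ a b : ℝ, |f a - f b| ≤ L * |a - b|) →
        (∫ x, ((1 - s) * x - f x) ^ 2 ∂p) ≤
          ∫ x, ((1 - s) * x - approxMinimizer s L (∫ y, y ∂p) x) ^ 2 ∂p →
        ∀ᵐ x ∂p, f x = approxMinimizer s L (∫ y, y ∂p) x) ∧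
    (L < 1 - s →
      ∀ f : ℝ → ℝ, (∀ a b : ℝ, |f a - f b| ≤ L * |a - b|) →
        (∫ x, ((1 - s) * x - f x) ^ 2 ∂p) ≤
          ∫ x, ((1 - s) * x - approxMinimizer s L (∫ y, y ∂p) x) ^ 2 ∂p →
        ∀ x ∈ convexHull ℝ (measSupport p),
          f x = approxMinimizer s L (∫ y, y ∂p) x) := by
  have hX : MemLp (fun x => x) 2 p := (memLp_two_iff_integrable_sq aestronglyMeasurable_id).2 h2
  have ae_eq : ∀ f : ℝ → ℝ, (∀ a b : ℝ, |f a - f b| ≤ L * |a - b|) →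
      (∫ x, ((1 - s) * x - f x) ^ 2 ∂p) ≤
        ∫ x, ((1 - s) * x - approxMinimizer s L (∫ y, y ∂p) x) ^ 2 ∂p →
      f =ᵐ[p] approxMinimizer s L (∫ y, y ∂p) := fun f hf hle =>
    ae_eq_of_integral_sq_sub_le_zero (memLp_of_abs_sub_le hX hf) (memLp_approxMinimizer hX)
      (by linarith [integral_sq_approxMinimizer_add_le (s := s) hX hf])
  refine ⟨fun f hf => ?_, ae_eq, fun hlt f hf hle => ?_⟩
  · have hgap : 0 ≤ ∫ x, (f x - approxMinimizer s L (∫ y, y ∂p) x) ^ 2 ∂p :=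
      integral_nonneg fun x => sq_nonneg _
    linarith [integral_sq_approxMinimizer_add_le (s := s) hX hf]
  · have hae := ae_eq f hf hle
    rw [approxMinimizer_of_lt hlt] at hae ⊢
    have hsupp := measSupport_subset_setOf_eq (lipschitzWith_of_abs_sub_le hf).continuous
      (by fun_prop) hae
    exact fun x hx => convexHull_min hsupp (convex_setOf_eq_mul_add hf _) hx

/-- **Approximation training over Lipschitz functions (Theorem 3.3).** Let `p`
be a probability measure on `ℝ` with finite first and second moments and mean
`μ`, `s = σ² ∈ (0,1]`, `0 ≤ L < 1`. Then `f*` minimizes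
`F(f) = ∫ |(1 - s)x - f(x)|² dp` among `L`-Lipschitz functions; any minimizer
coincides with `f*` `p`-a.e. (i.e. a.e. on the support of `p`), and if
`1 - s > L` any minimizer coincides with `f*` on the convex hull of the
support of `p`. -/
theorem approx_training_lipschitz_minimizer
    (p : Measure ℝ) [IsProbabilityMeasure p]
    (h1 : Integrable (fun x => x) p) (h2 : Integrable (fun x => x ^ 2) p)
    (s L : ℝ) (hs0 : 0 < s) (hs1 : s ≤ 1) (hL0 : 0 ≤ L) (hL1 : L < 1) :
    (∀ f : ℝ → ℝ, (∀ a b : ℝ, |f a - f b| ≤ L * |a - b|) →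
        ∫ x, ((1 - s) * x - approxMinimizer s L (∫ y, y ∂p) x) ^ 2 ∂p ≤
          ∫ x, ((1 - s) * x - f x) ^ 2 ∂p) ∧
    (∀ f : ℝ → ℝ, (∀ a b : ℝ, |f a - f b| ≤ L * |a - b|) →
        (∫ x, ((1 - s) * x - f x) ^ 2 ∂p) ≤
          ∫ x, ((1 - s) * x - approxMinimizer s L (∫ y, y ∂p) x) ^ 2 ∂p →
        ∀ᵐ x ∂p, f x = approxMinimizer s L (∫ y, y ∂p) x) ∧
    (L < 1 - s →
      ∀ f : ℝ → ℝ, (∀ a b : ℝ, |f a - f b| ≤ L * |a - b|) →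
        (∫ x, ((1 - s) * x - f x) ^ 2 ∂p) ≤
          ∫ x, ((1 - s) * x - approxMinimizer s L (∫ y, y ∂p) x) ^ 2 ∂p →
        ∀ x ∈ convexHull ℝ (measSupport p),
          f x = approxMinimizer s L (∫ y, y ∂p) x) :=
  approx_training_lipschitz_minimizer_general p h2 s L
end

section
/- Let σ² ∈ (0, 1], 0 ≤ L < 1, μ ∈ ℝ, and define f : ℝ → ℝ by f(x) = min(1 − σ², L)·x + max(0, 1 − σ² − L)·μ, and φ = Id − f. Then φ is bijective and its inverse is the affine map φ⁻¹(z) = z / max(σ², 1 − L) + b̂, where b̂ = (1 − σ² − L)·μ / (1 − L) if σ² < 1 − L and b̂ = 0 otherwise. In other words, the inverse of the trained iResNet component acts as the squared soft TSVD filter r̂_L(σ²) = 1 / max(σ², 1 − L) with bias b̂. -/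
/-- **The trained iResNet component inverts as the squared soft TSVD filter with
bias (Remark 3.4).** Let `s = σ² ∈ (0,1]`, `0 ≤ L < 1`, `μ ∈ ℝ`, and
`f(x) = min (1 - s) L · x + max 0 (1 - s - L) · μ`, `φ = Id - f`. Then `φ` is
bijective and `φ⁻¹(z) = z / max s (1 - L) + b̂` with
`b̂ = (1 - s - L)μ/(1 - L)` if `s < 1 - L` and `b̂ = 0` otherwise. -/
theorem squared_soft_TSVD_filter
    (s L μ : ℝ) (hs0 : 0 < s) (hs1 : s ≤ 1) (hL0 : 0 ≤ L) (hL1 : L < 1) :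
    Function.Bijective
        (fun x : ℝ => x - (min (1 - s) L * x + max 0 (1 - s - L) * μ)) ∧
      ∀ z : ℝ,
        Function.invFun
            (fun x : ℝ => x - (min (1 - s) L * x + max 0 (1 - s - L) * μ)) z =
          z / max s (1 - L) +
            (if s < 1 - L then (1 - s - L) * μ / (1 - L) else 0) := by
  set m := max s (1 - L) with hmdef
  have hm : (0:ℝ) < m := lt_max_of_lt_left hs0
  set b : ℝ := if s < 1 - L then (1 - s - L) * μ / (1 - L) else 0 with hbdef
  have hmin : min (1 - s) L = 1 - m := by
    rcases le_total (1 - s) L with h | h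
    · rw [min_eq_left h, hmdef, max_eq_left (by linarith)]
    · rw [min_eq_right h, hmdef, max_eq_right (by linarith)]; ring
  have hmb : m * b = max 0 (1 - s - L) * μ := by
    by_cases h : s < 1 - L
    · rw [hbdef, if_pos h, hmdef, max_eq_right (by linarith),
        max_eq_right (by linarith)]
      have h1 : (1:ℝ) - L ≠ 0 := by linarith
      field_simp
    · rw [hbdef, if_neg h, max_eq_left (by push_neg at h; linarith)]
      ring
  set φ : ℝ → ℝ := fun x : ℝ => x - (min (1 - s) L * x + max 0 (1 - s - L) * μ)
    with hφ
  set g : ℝ → ℝ := fun z => z / m + b with hg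
  have hφx : ∀ x, φ x = m * x - max 0 (1 - s - L) * μ := by
    intro x; rw [hφ]; simp only [hmin]; ring
  have hleft : Function.LeftInverse g φ := by
    intro x
    rw [hg]; simp only [hφx]
    field_simp
    nlinarith [hmb]
  have hright : Function.RightInverse g φ := by
    intro z
    rw [hφx, hg]
    field_simp
    nlinarith [hmb]
  have hbij : Function.Bijective φ :=
    ⟨hleft.injective, hright.surjective⟩
  refine ⟨hbij, fun z => ?_⟩
  have : Function.invFun φ z = g z := by
    apply hbij.injective
    rw [Function.invFun_eq ⟨g z, hright z⟩, hright z]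
  rw [this, hg]
end

section
/- Let p_X and p_H be probability measures on ℝ with finite first and second moments, with mean of p_X equal to μ_X, mean of p_H equal to 0, and σ⁴·Var(p_X) + Var(p_H) > 0. Let σ² ∈ (0, 1] and 0 ≤ L < 1. Among all affine functions ψ(z) = m·z + b with 1/(1+L) ≤ m ≤ 1/(1−L), the expected reconstruction loss ∫∫ |ψ(σ²·x + η) − x|² dp_H(η) dp_X(x) (with x ~ p_X and η ~ p_H independent) is uniquely minimized by ψ*(z) = m*·z + (1 − σ²·m*)·μ_X, where m* is the value σ²·Var(p_X)/(σ⁴·Var(p_X) + Var(p_H)) clamped to the interval [1/(1+L), 1/(1−L)]; i.e. m* = 1/(1+L) if that ratio is < 1/(1+L), m* equals the ratio if it lies in [1/(1+L), 1/(1−L)], and m* = 1/(1−L) if the ratio is > 1/(1−L). -/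
open MeasureTheory

/-- Mean of a probability measure on `ℝ`. -/
noncomputable def measMean (p : Measure ℝ) : ℝ := ∫ x, x ∂p

/-- Variance of a probability measure on `ℝ`. -/
noncomputable def measVar (p : Measure ℝ) : ℝ := ∫ x, (x - measMean p) ^ 2 ∂p

/-- The value `r` clamped to the interval `[1/(1+L), 1/(1-L)]`. -/
noncomputable def clampedSlope (L r : ℝ) : ℝ :=
  if r < 1 / (1 + L) then 1 / (1 + L)
  else if 1 / (1 - L) < r then 1 / (1 - L) else r

/-- Expected reconstruction loss of the affine map `z ↦ m z + b` for the 1D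
problem `z = s·x + η`, with `x ~ pX` and `η ~ pH` independent. -/
noncomputable def affineReconLoss (pX pH : Measure ℝ) (s m b : ℝ) : ℝ :=
  ∫ x, ∫ η, (m * (s * x + η) + b - x) ^ 2 ∂pH ∂pX

/-! The loss is an explicit quadratic in `(m, b)`. Writing `z = s x + η`, the error
`m z + b - x = ((m s - 1) x + b) + m η` splits, because `η` is centred and independent of `x`,
into `m² Var(p_H)` plus the bias-variance decomposition
`(m s - 1)² Var(p_X) + ((m s - 1) μ_X + b)²`. The intercept term vanishes exactly at
`b = (1 - s m) μ_X`, and completing the square in `m` leaves `c (m - r)² + const` with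
`c = s² Var(p_X) + Var(p_H) > 0` and `r` the unconstrained optimal slope; over an interval
this is uniquely minimized at the point of the interval nearest to `r`. -/

lemma integrable_mul_add_sq (p : Measure ℝ) [IsFiniteMeasure p]
    (h1 : Integrable (fun x => x) p) (h2 : Integrable (fun x => x ^ 2) p) (a b : ℝ) :
    Integrable (fun x => (a * x + b) ^ 2) p := by
  refine (((h2.const_mul (a ^ 2)).add (h1.const_mul (2 * a * b))).add
    (integrable_const (b ^ 2))).congr (.of_forall fun x => ?_)
  simp only [Pi.add_apply]
  ring

lemma integral_mul_add_sq (p : Measure ℝ) [IsProbabilityMeasure p]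
    (h1 : Integrable (fun x => x) p) (h2 : Integrable (fun x => x ^ 2) p) (a b : ℝ) :
    ∫ x, (a * x + b) ^ 2 ∂p = a ^ 2 * measVar p + (a * measMean p + b) ^ 2 := by
  set μ := measMean p
  have hcentred : Integrable (fun x => (x - μ) ^ 2) p := by
    refine (integrable_mul_add_sq p h1 h2 1 (-μ)).congr (.of_forall fun x => ?_)
    beta_reduce
    ring
  have hlinear : Integrable (fun x => 2 * a * (a * μ + b) * x + (b ^ 2 - a ^ 2 * μ ^ 2)) p :=
    (h1.const_mul _).add (integrable_const _)
  calc ∫ x, (a * x + b) ^ 2 ∂p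
      = ∫ x, a ^ 2 * (x - μ) ^ 2 + (2 * a * (a * μ + b) * x + (b ^ 2 - a ^ 2 * μ ^ 2)) ∂p := by
        congr 1; ext x; ring
    _ = a ^ 2 * measVar p + (2 * a * (a * μ + b) * μ + (b ^ 2 - a ^ 2 * μ ^ 2)) := by
        rw [integral_add (hcentred.const_mul _) hlinear, integral_const_mul,
          integral_add (h1.const_mul _) (integrable_const _), integral_const_mul]
        simp [measVar, μ, measMean]
    _ = a ^ 2 * measVar p + (a * μ + b) ^ 2 := by ring

lemma affineReconLoss_eq (pX pH : Measure ℝ) [IsProbabilityMeasure pX] [IsProbabilityMeasure pH]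
    (hX1 : Integrable (fun x => x) pX) (hX2 : Integrable (fun x => x ^ 2) pX)
    (hH1 : Integrable (fun η => η) pH) (hH2 : Integrable (fun η => η ^ 2) pH)
    (hHmean : measMean pH = 0) (s m b : ℝ) :
    affineReconLoss pX pH s m b =
      (m * s - 1) ^ 2 * measVar pX + ((m * s - 1) * measMean pX + b) ^ 2
        + m ^ 2 * measVar pH := by
  have hinner : ∀ x, ∫ η, (m * (s * x + η) + b - x) ^ 2 ∂pH
      = ((m * s - 1) * x + b) ^ 2 + m ^ 2 * measVar pH := by
    intro x
    calc ∫ η, (m * (s * x + η) + b - x) ^ 2 ∂pH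
        = ∫ η, (m * η + ((m * s - 1) * x + b)) ^ 2 ∂pH := by congr 1; ext η; ring
      _ = _ := by rw [integral_mul_add_sq pH hH1 hH2, hHmean]; ring
  unfold affineReconLoss
  simp_rw [hinner]
  rw [integral_add (integrable_mul_add_sq pX hX1 hX2 _ _) (integrable_const _),
    integral_mul_add_sq pX hX1 hX2]
  simp only [integral_const, probReal_univ, one_smul]

section clampedSlope

variable {L r m : ℝ}

lemma sq_clampedSlope_sub_le (hm₁ : 1 / (1 + L) ≤ m) (hm₂ : m ≤ 1 / (1 - L)) :
    (clampedSlope L r - r) ^ 2 ≤ (m - r) ^ 2 := by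
  unfold clampedSlope
  split_ifs <;> nlinarith

lemma eq_clampedSlope_of_sq_sub_le (hm₁ : 1 / (1 + L) ≤ m) (hm₂ : m ≤ 1 / (1 - L))
    (h : (m - r) ^ 2 ≤ (clampedSlope L r - r) ^ 2) : m = clampedSlope L r := by
  unfold clampedSlope at h ⊢
  split_ifs at h ⊢ <;> nlinarith

end clampedSlope

theorem recon_training_affine_minimizer_general
    (pX pH : Measure ℝ) [IsProbabilityMeasure pX] [IsProbabilityMeasure pH]
    (hX1 : Integrable (fun x => x) pX) (hX2 : Integrable (fun x => x ^ 2) pX)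
    (hH1 : Integrable (fun η => η) pH) (hH2 : Integrable (fun η => η ^ 2) pH)
    (hHmean : measMean pH = 0)
    (s L : ℝ)
    (hpos : 0 < s ^ 2 * measVar pX + measVar pH) :
    (∀ m b : ℝ, 1 / (1 + L) ≤ m → m ≤ 1 / (1 - L) →
        affineReconLoss pX pH s
            (clampedSlope L (s * measVar pX / (s ^ 2 * measVar pX + measVar pH)))
            ((1 - s * clampedSlope L
                (s * measVar pX / (s ^ 2 * measVar pX + measVar pH))) * measMean pX) ≤
          affineReconLoss pX pH s m b) ∧
      (∀ m b : ℝ, 1 / (1 + L) ≤ m → m ≤ 1 / (1 - L) →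
        affineReconLoss pX pH s m b ≤
          affineReconLoss pX pH s
            (clampedSlope L (s * measVar pX / (s ^ 2 * measVar pX + measVar pH)))
            ((1 - s * clampedSlope L
                (s * measVar pX / (s ^ 2 * measVar pX + measVar pH))) * measMean pX) →
        m = clampedSlope L (s * measVar pX / (s ^ 2 * measVar pX + measVar pH)) ∧
          b = (1 - s * clampedSlope L
              (s * measVar pX / (s ^ 2 * measVar pX + measVar pH))) * measMean pX) := by
  set c := s ^ 2 * measVar pX + measVar pH with hc
  set r := s * measVar pX / c
  have hcr : c * r = s * measVar pX := mul_div_cancel₀ _ hpos.ne'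
  set mstar := clampedSlope L r
  have hloss : ∀ m b, affineReconLoss pX pH s m b = c * (m - r) ^ 2
      + ((m * s - 1) * measMean pX + b) ^ 2 + (measVar pX - c * r ^ 2) := by
    intro m b
    rw [affineReconLoss_eq pX pH hX1 hX2 hH1 hH2 hHmean]
    linear_combination 2 * m * hcr - m ^ 2 * hc
  have hloss_star : affineReconLoss pX pH s mstar ((1 - s * mstar) * measMean pX)
      = c * (mstar - r) ^ 2 + (measVar pX - c * r ^ 2) := by
    rw [hloss]; ring
  rw [hloss_star]
  refine ⟨fun m b hm₁ hm₂ => ?_, fun m b hm₁ hm₂ hle => ?_⟩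
  · rw [hloss]
    nlinarith [sq_clampedSlope_sub_le (r := r) hm₁ hm₂, sq_nonneg ((m * s - 1) * measMean pX + b)]
  · rw [hloss] at hle
    have hm : m = mstar := eq_clampedSlope_of_sq_sub_le hm₁ hm₂ <|
      le_of_mul_le_mul_left (by nlinarith [sq_nonneg ((m * s - 1) * measMean pX + b)]) hpos
    rw [hm] at hle
    have hbias : (mstar * s - 1) * measMean pX + b = 0 :=
      pow_eq_zero_iff two_ne_zero |>.mp <| le_antisymm (by linarith) (sq_nonneg _)
    exact ⟨hm, by linear_combination hbias⟩

/-- **Reconstruction training over affine maps (Lemma 4.7).** Let `pX, pH` be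
probability measures on `ℝ` with finite first and second moments, `pH` centered,
`s = σ² ∈ (0,1]`, `0 ≤ L < 1`, and `s²·Var(pX) + Var(pH) > 0`. Among affine
maps `ψ(z) = m z + b` with `1/(1+L) ≤ m ≤ 1/(1-L)`, the expected reconstruction
loss is uniquely minimized by `m* = clamp(s·Var(pX)/(s²·Var(pX) + Var(pH)))` and
`b* = (1 - s·m*)·μ_X`. -/
theorem recon_training_affine_minimizer
    (pX pH : Measure ℝ) [IsProbabilityMeasure pX] [IsProbabilityMeasure pH]
    (hX1 : Integrable (fun x => x) pX) (hX2 : Integrable (fun x => x ^ 2) pX)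
    (hH1 : Integrable (fun η => η) pH) (hH2 : Integrable (fun η => η ^ 2) pH)
    (hHmean : measMean pH = 0)
    (s L : ℝ) (hs0 : 0 < s) (hs1 : s ≤ 1) (hL0 : 0 ≤ L) (hL1 : L < 1)
    (hpos : 0 < s ^ 2 * measVar pX + measVar pH) :
    (∀ m b : ℝ, 1 / (1 + L) ≤ m → m ≤ 1 / (1 - L) →
        affineReconLoss pX pH s
            (clampedSlope L (s * measVar pX / (s ^ 2 * measVar pX + measVar pH)))
            ((1 - s * clampedSlope L
                (s * measVar pX / (s ^ 2 * measVar pX + measVar pH))) * measMean pX) ≤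
          affineReconLoss pX pH s m b) ∧
      (∀ m b : ℝ, 1 / (1 + L) ≤ m → m ≤ 1 / (1 - L) →
        affineReconLoss pX pH s m b ≤
          affineReconLoss pX pH s
            (clampedSlope L (s * measVar pX / (s ^ 2 * measVar pX + measVar pH)))
            ((1 - s * clampedSlope L
                (s * measVar pX / (s ^ 2 * measVar pX + measVar pH))) * measMean pX) →
        m = clampedSlope L (s * measVar pX / (s ^ 2 * measVar pX + measVar pH)) ∧
          b = (1 - s * clampedSlope L
              (s * measVar pX / (s ^ 2 * measVar pX + measVar pH))) * measMean pX) :=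
  recon_training_affine_minimizer_general pX pH hX1 hX2 hH1 hH2 hHmean s L hpos
end

section
/- Let p_X = N(μ_X, v²) and p_H = N(0, w²) be Gaussian probability distributions on ℝ with v, w > 0, let σ² ∈ (0, 1] and 0 ≤ L < 1, and let x ~ p_X and η ~ p_H be independent. Define ψ*(z) = m*·z + (1 − σ²·m*)·μ_X where m* is σ²·v² / (σ⁴·v² + w²) clamped to [1/(1+L), 1/(1−L)]. Then ψ* minimizes the expected reconstruction loss E[|ψ(σ²·x + η) − x|²] among all continuously differentiable functions ψ : ℝ → ℝ with 1/(1+L) ≤ ψ′(z) ≤ 1/(1−L) for all z ∈ ℝ (and with ψ(σ²x+η) square-integrable). -/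
open MeasureTheory ProbabilityTheory
open scoped NNReal

lemma clampedSlope_sub_mul_sub_nonneg (L r y : ℝ) (hy : 1 / (1 + L) ≤ y ∧ y ≤ 1 / (1 - L)) :
    0 ≤ (clampedSlope L r - r) * (y - clampedSlope L r) := by
  unfold clampedSlope
  split_ifs <;> nlinarith

lemma integral_sq_le_of_integral_sub_mul_nonneg {α : Type*} [MeasurableSpace α]
    {μ : Measure α} {f g : α → ℝ} (hf : MemLp f 2 μ) (hg : MemLp g 2 μ)
    (hfg : 0 ≤ ∫ a, (g a - f a) * f a ∂μ) :
    ∫ a, f a ^ 2 ∂μ ≤ ∫ a, g a ^ 2 ∂μ := by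
  have hd : MemLp (fun a => g a - f a) 2 μ := hg.sub hf
  have hcross : Integrable (fun a => 2 * ((g a - f a) * f a)) μ :=
    (hd.integrable_mul hf).const_mul 2
  have hrest : Integrable (fun a => (g a - f a) ^ 2 + 2 * ((g a - f a) * f a)) μ :=
    hd.integrable_sq.add hcross
  have hexp : (fun a => g a ^ 2) =
      fun a => f a ^ 2 + ((g a - f a) ^ 2 + 2 * ((g a - f a) * f a)) := by
    ext a; ring
  rw [hexp, integral_add hf.integrable_sq hrest, integral_add hd.integrable_sq hcross,
    integral_const_mul]
  have : 0 ≤ ∫ a, (g a - f a) ^ 2 ∂μ := integral_nonneg fun a => sq_nonneg _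
  linarith

lemma lipschitzWith_of_hasDerivAt_of_abs_le {f f' : ℝ → ℝ} {M : ℝ}
    (hf : ∀ t, HasDerivAt f (f' t) t) (hM : ∀ t, |f' t| ≤ M) : LipschitzWith M.toNNReal f :=
  lipschitzOnWith_univ.1 <| convex_univ.lipschitzOnWith_of_nnnorm_hasDerivWithin_le
    (fun t _ => (hf t).hasDerivWithinAt) fun t _ => by
      rw [← NNReal.coe_le_coe, coe_nnnorm, Real.norm_eq_abs, Real.coe_toNNReal']
      exact le_max_of_le_left (hM t)

lemma measurable_of_hasDerivAt {f f' : ℝ → ℝ} (hf : ∀ t, HasDerivAt f (f' t) t) :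
    Measurable f' :=
  funext (fun t => (hf t).deriv) ▸ measurable_deriv f

lemma LipschitzWith.memLp_comp {α E F : Type*} [MeasurableSpace α] {μ : Measure α}
    [IsFiniteMeasure μ] [NormedAddCommGroup E] [NormedAddCommGroup F] {p : ENNReal} {K : ℝ≥0}
    {g : E → F} {X : α → E} (hg : LipschitzWith K g) (hX : MemLp X p μ) :
    MemLp (fun a => g (X a)) p μ := by
  have h0 : LipschitzWith K (fun x => g x - g 0) := by
    simpa using hg.sub (LipschitzWith.const (g 0))
  convert (h0.comp_memLp (by simp) hX).add (memLp_const (g 0)) using 1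
  ext a; simp

namespace ProbabilityTheory

lemma hasDerivAt_gaussianPDFReal (c : ℝ) (V : ℝ≥0) (x : ℝ) :
    HasDerivAt (gaussianPDFReal c V) (-((x - c) / V) * gaussianPDFReal c V x) x := by
  have h := ((((hasDerivAt_id' x).sub_const c).pow 2).neg.div_const (2 * (V : ℝ))).exp.const_mul
    (√(2 * Real.pi * V))⁻¹
  rw [gaussianPDFReal_def]
  refine h.congr_deriv ?_
  simp only [Pi.pow_apply, Pi.neg_apply]
  ring

lemma integrable_gaussianReal_iff {c : ℝ} {V : ℝ≥0} (hV : V ≠ 0) {g : ℝ → ℝ} :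
    Integrable g (gaussianReal c V) ↔ Integrable (fun x => gaussianPDFReal c V x • g x) := by
  rw [gaussianReal_of_var_ne_zero c hV, integrable_withDensity_iff_integrable_smul'
    (measurable_gaussianPDF c V) (ae_of_all _ fun _ => gaussianPDF_lt_top)]
  simp only [toReal_gaussianPDF]

theorem integral_sub_mul_gaussianReal (c : ℝ) (V : ℝ≥0) {f f' : ℝ → ℝ} {M : ℝ}
    (hf : ∀ t, HasDerivAt f (f' t) t) (hM : ∀ t, |f' t| ≤ M) :
    ∫ t, (t - c) * f t ∂gaussianReal c V = V * ∫ t, f' t ∂gaussianReal c V := by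
  rcases eq_or_ne V 0 with rfl | hV
  · simp [gaussianReal_zero_var]
  set φ := gaussianPDFReal c V
  have hfL2 : MemLp f 2 (gaussianReal c V) :=
    (lipschitzWith_of_hasDerivAt_of_abs_le hf hM).memLp_comp (memLp_id_gaussianReal 2)
  have hcL2 : MemLp (fun t => t - c) 2 (gaussianReal c V) :=
    (memLp_id_gaussianReal 2).sub (memLp_const c)
  have hf'_int : Integrable f' (gaussianReal c V) :=
    .of_bound (measurable_of_hasDerivAt hf).aestronglyMeasurable M (ae_of_all _ hM)
  have hf_int := (integrable_gaussianReal_iff hV).1 (hfL2.integrable one_le_two)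
  have hcf_int := (integrable_gaussianReal_iff hV).1 (hcL2.integrable_mul hfL2)
  have ibp := integral_mul_deriv_eq_deriv_mul_of_integrable (u := f) (v := φ)
    (fun t _ => hf t) (fun t _ => hasDerivAt_gaussianPDFReal c V t)
    ((hcf_int.const_mul (-(V : ℝ)⁻¹)).congr (ae_of_all _ fun t => by
      simp only [Pi.mul_apply, smul_eq_mul]; ring))
    (((integrable_gaussianReal_iff hV).1 hf'_int).congr (ae_of_all _ fun t => by
      simp only [Pi.mul_apply, smul_eq_mul]; ring))
    (hf_int.congr (ae_of_all _ fun t => by simp only [Pi.mul_apply, smul_eq_mul]; ring))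
  have hV0 : (V : ℝ) ≠ 0 := by exact_mod_cast hV
  rw [integral_gaussianReal_eq_integral_smul hV, integral_gaussianReal_eq_integral_smul hV]
  calc ∫ t, φ t • ((t - c) * f t) = -V * ∫ t, f t * (-((t - c) / V) * φ t) := by
        rw [← integral_const_mul]; congr 1; ext t; simp only [smul_eq_mul]; field_simp
    _ = V * ∫ t, φ t • f' t := by
        rw [ibp]; simp only [smul_eq_mul, mul_comm (φ _)]; ring

section GaussianProduct

variable (c₁ c₂ s : ℝ) (V W : ℝ≥0) {g g' : ℝ → ℝ} {M : ℝ}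

lemma memLp_fst_gaussianReal_prod :
    MemLp Prod.fst 2 ((gaussianReal c₁ V).prod (gaussianReal c₂ W)) :=
  (memLp_id_gaussianReal 2).comp_measurePreserving measurePreserving_fst

lemma memLp_snd_gaussianReal_prod :
    MemLp Prod.snd 2 ((gaussianReal c₁ V).prod (gaussianReal c₂ W)) :=
  (memLp_id_gaussianReal 2).comp_measurePreserving measurePreserving_snd

lemma memLp_affine_gaussianReal_prod :
    MemLp (fun q : ℝ × ℝ => s * q.1 + q.2) 2
      ((gaussianReal c₁ V).prod (gaussianReal c₂ W)) :=
  ((memLp_fst_gaussianReal_prod c₁ c₂ V W).const_mul s).add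
    (memLp_snd_gaussianReal_prod c₁ c₂ V W)

lemma memLp_comp_affine_gaussianReal_prod (hg : ∀ t, HasDerivAt g (g' t) t)
    (hM : ∀ t, |g' t| ≤ M) :
    MemLp (fun q : ℝ × ℝ => g (s * q.1 + q.2)) 2
      ((gaussianReal c₁ V).prod (gaussianReal c₂ W)) :=
  (lipschitzWith_of_hasDerivAt_of_abs_le hg hM).memLp_comp
    (memLp_affine_gaussianReal_prod c₁ c₂ s V W)

variable {c₁ c₂ s V W}

lemma integrable_comp_affine_gaussianReal_prod (hg : ∀ t, HasDerivAt g (g' t) t)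
    (hM : ∀ t, |g' t| ≤ M) :
    Integrable (fun q : ℝ × ℝ => g' (s * q.1 + q.2))
      ((gaussianReal c₁ V).prod (gaussianReal c₂ W)) :=
  .of_bound ((measurable_of_hasDerivAt hg).comp (by fun_prop)).aestronglyMeasurable M
    (ae_of_all _ fun _ => hM _)

lemma integral_comp_affine_mul_sub_snd_gaussianReal_prod (hg : ∀ t, HasDerivAt g (g' t) t)
    (hM : ∀ t, |g' t| ≤ M) :
    ∫ q, g (s * q.1 + q.2) * (q.2 - c₂) ∂((gaussianReal c₁ V).prod (gaussianReal c₂ W)) =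
      W * ∫ q, g' (s * q.1 + q.2) ∂((gaussianReal c₁ V).prod (gaussianReal c₂ W)) := by
  have hint := (memLp_comp_affine_gaussianReal_prod c₁ c₂ s V W hg hM).integrable_mul
    ((memLp_snd_gaussianReal_prod c₁ c₂ V W).sub (memLp_const c₂))
  rw [integral_prod (fun q : ℝ × ℝ => g (s * q.1 + q.2) * (q.2 - c₂)) hint,
    integral_prod _ (integrable_comp_affine_gaussianReal_prod hg hM), ← integral_const_mul]
  refine integral_congr_ae (ae_of_all _ fun x => ?_)
  calc ∫ t, g (s * x + t) * (t - c₂) ∂gaussianReal c₂ W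
      = ∫ t, (t - c₂) * g (s * x + t) ∂gaussianReal c₂ W := by congr 1; ext t; ring
    _ = W * ∫ t, g' (s * x + t) ∂gaussianReal c₂ W :=
      integral_sub_mul_gaussianReal c₂ W (fun t => (hg (s * x + t)).comp_const_add (s * x) t)
        (fun t => hM _)

lemma integral_comp_affine_mul_sub_fst_gaussianReal_prod (hg : ∀ t, HasDerivAt g (g' t) t)
    (hM : ∀ t, |g' t| ≤ M) :
    ∫ q, g (s * q.1 + q.2) * (q.1 - c₁) ∂((gaussianReal c₁ V).prod (gaussianReal c₂ W)) =
      s * V * ∫ q, g' (s * q.1 + q.2) ∂((gaussianReal c₁ V).prod (gaussianReal c₂ W)) := by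
  have hint := (memLp_comp_affine_gaussianReal_prod c₁ c₂ s V W hg hM).integrable_mul
    ((memLp_fst_gaussianReal_prod c₁ c₂ V W).sub (memLp_const c₁))
  rw [integral_prod_symm (fun q : ℝ × ℝ => g (s * q.1 + q.2) * (q.1 - c₁)) hint,
    integral_prod_symm _ (integrable_comp_affine_gaussianReal_prod hg hM), ← integral_const_mul]
  refine integral_congr_ae (ae_of_all _ fun η => ?_)
  have hd : ∀ t, HasDerivAt (fun t => g (s * t + η)) (g' (s * t + η) * s) t := fun t =>
    ((hg (s * t + η)).comp t (((hasDerivAt_id' t).const_mul s).add_const η)).congr_deriv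
      (by ring)
  calc ∫ t, g (s * t + η) * (t - c₁) ∂gaussianReal c₁ V
      = ∫ t, (t - c₁) * g (s * t + η) ∂gaussianReal c₁ V := by congr 1; ext t; ring
    _ = V * ∫ t, g' (s * t + η) * s ∂gaussianReal c₁ V :=
      integral_sub_mul_gaussianReal c₁ V hd (M := M * |s|) fun t => by
        rw [abs_mul]; exact mul_le_mul_of_nonneg_right (hM _) (abs_nonneg s)
    _ = s * V * ∫ t, g' (s * t + η) ∂gaussianReal c₁ V := by rw [integral_mul_const]; ring

theorem integral_comp_affine_mul_gaussianReal_prod (α β : ℝ) (hg : ∀ t, HasDerivAt g (g' t) t)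
    (hM : ∀ t, |g' t| ≤ M) :
    ∫ q, g (s * q.1 + q.2) * (α * (q.1 - c₁) + β * (q.2 - c₂))
        ∂((gaussianReal c₁ V).prod (gaussianReal c₂ W)) =
      (α * s * V + β * W) *
        ∫ q, g' (s * q.1 + q.2) ∂((gaussianReal c₁ V).prod (gaussianReal c₂ W)) := by
  have hgZ := memLp_comp_affine_gaussianReal_prod c₁ c₂ s V W hg hM
  have h₁ : Integrable (fun q : ℝ × ℝ => α * (g (s * q.1 + q.2) * (q.1 - c₁)))
      ((gaussianReal c₁ V).prod (gaussianReal c₂ W)) :=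
    (hgZ.integrable_mul
      ((memLp_fst_gaussianReal_prod c₁ c₂ V W).sub (memLp_const c₁))).const_mul α
  have h₂ : Integrable (fun q : ℝ × ℝ => β * (g (s * q.1 + q.2) * (q.2 - c₂)))
      ((gaussianReal c₁ V).prod (gaussianReal c₂ W)) :=
    (hgZ.integrable_mul
      ((memLp_snd_gaussianReal_prod c₁ c₂ V W).sub (memLp_const c₂))).const_mul β
  simp only [mul_add, mul_left_comm _ α, mul_left_comm _ β]
  rw [integral_add h₁ h₂, integral_const_mul, integral_const_mul,
    integral_comp_affine_mul_sub_fst_gaussianReal_prod hg hM,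
    integral_comp_affine_mul_sub_snd_gaussianReal_prod hg hM]
  ring

end GaussianProduct

end ProbabilityTheory

theorem clampedSlope_affine_variational_inequality (μX v w s L : ℝ) (hw : 0 < w)
    {ψ ψ' : ℝ → ℝ} (hψ : ∀ z, HasDerivAt ψ (ψ' z) z)
    (hψ' : ∀ z, 1 / (1 + L) ≤ ψ' z ∧ ψ' z ≤ 1 / (1 - L)) :
    let m := clampedSlope L (s * v ^ 2 / (s ^ 2 * v ^ 2 + w ^ 2))
    0 ≤ ∫ q, (ψ (s * q.1 + q.2) - (m * (s * q.1 + q.2) + (1 - s * m) * μX)) *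
        (m * (s * q.1 + q.2) + (1 - s * m) * μX - q.1)
      ∂((gaussianReal μX (Real.toNNReal (v ^ 2))).prod
        (gaussianReal 0 (Real.toNNReal (w ^ 2)))) := by
  intro m
  set r := s * v ^ 2 / (s ^ 2 * v ^ 2 + w ^ 2)
  set μ :=
    (gaussianReal μX (Real.toNNReal (v ^ 2))).prod (gaussianReal 0 (Real.toNNReal (w ^ 2)))
  have hD : ∀ z, HasDerivAt (fun z => ψ z - (m * z + (1 - s * m) * μX)) (ψ' z - m) z :=
    fun z => (hψ z).sub ((((hasDerivAt_id' z).const_mul m).add_const _).congr_deriv (mul_one m))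
  have hD' : ∀ z, |ψ' z - m| ≤ |1 / (1 + L) - m| + |1 / (1 - L) - m| := fun z => by
    obtain ⟨ha, hb⟩ := hψ' z
    rw [abs_le]
    constructor <;> linarith [le_abs_self (1 / (1 - L) - m), neg_abs_le (1 / (1 + L) - m),
      abs_nonneg (1 / (1 + L) - m), abs_nonneg (1 / (1 - L) - m)]
  have hP : s ^ 2 * v ^ 2 + w ^ 2 ≠ 0 := by positivity
  calc 0 ≤ ∫ q, (s ^ 2 * v ^ 2 + w ^ 2) * ((m - r) * (ψ' (s * q.1 + q.2) - m)) ∂μ :=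
        integral_nonneg fun q => mul_nonneg (by positivity)
          (clampedSlope_sub_mul_sub_nonneg L r _ (hψ' _))
    _ = ((m * s - 1) * s * v ^ 2 + m * w ^ 2) * ∫ q, (ψ' (s * q.1 + q.2) - m) ∂μ := by
        rw [← integral_const_mul]; congr 1; ext q; simp only [r]; field_simp; ring
    _ = _ := by
        rw [← Real.coe_toNNReal _ (sq_nonneg v), ← Real.coe_toNNReal _ (sq_nonneg w),
          ← integral_comp_affine_mul_gaussianReal_prod _ _ hD hD']
        congr 1; ext q; ring

theorem recon_training_gaussian_minimizer_general
    (μX v w s L : ℝ) (hw : 0 < w) :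
    ∀ ψ : ℝ → ℝ, ContDiff ℝ 1 ψ →
      (∀ z : ℝ, 1 / (1 + L) ≤ deriv ψ z ∧ deriv ψ z ≤ 1 / (1 - L)) →
      Integrable (fun q : ℝ × ℝ => (ψ (s * q.1 + q.2)) ^ 2)
        ((gaussianReal μX (Real.toNNReal (v ^ 2))).prod
          (gaussianReal 0 (Real.toNNReal (w ^ 2)))) →
      (∫ x, ∫ η,
          ((clampedSlope L (s * v ^ 2 / (s ^ 2 * v ^ 2 + w ^ 2))) * (s * x + η) +
              (1 - s * clampedSlope L (s * v ^ 2 / (s ^ 2 * v ^ 2 + w ^ 2))) * μX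
            - x) ^ 2
          ∂(gaussianReal 0 (Real.toNNReal (w ^ 2)))
          ∂(gaussianReal μX (Real.toNNReal (v ^ 2)))) ≤
        ∫ x, ∫ η, (ψ (s * x + η) - x) ^ 2
          ∂(gaussianReal 0 (Real.toNNReal (w ^ 2)))
          ∂(gaussianReal μX (Real.toNNReal (v ^ 2))) := by
  intro ψ hψ hψ' hψ2
  set m := clampedSlope L (s * v ^ 2 / (s ^ 2 * v ^ 2 + w ^ 2))
  set μ :=
    (gaussianReal μX (Real.toNNReal (v ^ 2))).prod (gaussianReal 0 (Real.toNNReal (w ^ 2)))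
  have hX := memLp_fst_gaussianReal_prod μX 0 (Real.toNNReal (v ^ 2)) (Real.toNNReal (w ^ 2))
  have hopt : MemLp (fun q : ℝ × ℝ => m * (s * q.1 + q.2) + (1 - s * m) * μX - q.1) 2 μ :=
    (((memLp_affine_gaussianReal_prod _ _ s _ _).const_mul m).add (memLp_const _)).sub hX
  have hψZ : MemLp (fun q : ℝ × ℝ => ψ (s * q.1 + q.2) - q.1) 2 μ :=
    ((memLp_two_iff_integrable_sq (hψ.continuous.comp (by fun_prop)).aestronglyMeasurable).2
      hψ2).sub hX
  have key := integral_sq_le_of_integral_sub_mul_nonneg hopt hψZ <| by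
    convert clampedSlope_affine_variational_inequality μX v w s L hw
      (fun z => (hψ.differentiable one_ne_zero z).hasDerivAt) hψ' using 3
    ring
  rwa [integral_prod _ hopt.integrable_sq, integral_prod _ hψZ.integrable_sq] at key

/-- **Reconstruction training with Gaussian prior and noise (Corollary 4.8).**
Let `pX = N(μX, v²)`, `pH = N(0, w²)`, `s = σ² ∈ (0,1]`, `0 ≤ L < 1`, and set
`ψ*(z) = m* z + (1 - s m*) μX` with `m*` the value `s v²/(s² v² + w²)` clamped
to `[1/(1+L), 1/(1-L)]`. Then `ψ*` minimizes the expected reconstruction loss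
`E[|ψ(s·x + η) - x|²]` among all `C¹` functions `ψ : ℝ → ℝ` with
`1/(1+L) ≤ ψ′ ≤ 1/(1-L)` everywhere and `ψ(s·x + η)` square-integrable. -/
theorem recon_training_gaussian_minimizer
    (μX v w s L : ℝ) (hv : 0 < v) (hw : 0 < w)
    (hs0 : 0 < s) (hs1 : s ≤ 1) (hL0 : 0 ≤ L) (hL1 : L < 1) :
    ∀ ψ : ℝ → ℝ, ContDiff ℝ 1 ψ →
      (∀ z : ℝ, 1 / (1 + L) ≤ deriv ψ z ∧ deriv ψ z ≤ 1 / (1 - L)) →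
      Integrable (fun q : ℝ × ℝ => (ψ (s * q.1 + q.2)) ^ 2)
        ((gaussianReal μX (Real.toNNReal (v ^ 2))).prod
          (gaussianReal 0 (Real.toNNReal (w ^ 2)))) →
      (∫ x, ∫ η,
          ((clampedSlope L (s * v ^ 2 / (s ^ 2 * v ^ 2 + w ^ 2))) * (s * x + η) +
              (1 - s * clampedSlope L (s * v ^ 2 / (s ^ 2 * v ^ 2 + w ^ 2))) * μX
            - x) ^ 2
          ∂(gaussianReal 0 (Real.toNNReal (w ^ 2)))
          ∂(gaussianReal μX (Real.toNNReal (v ^ 2)))) ≤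
        ∫ x, ∫ η, (ψ (s * x + η) - x) ^ 2
          ∂(gaussianReal 0 (Real.toNNReal (w ^ 2)))
          ∂(gaussianReal μX (Real.toNNReal (v ^ 2))) :=
  recon_training_gaussian_minimizer_general μX v w s L hw
end

section
/- Let p be a probability measure on ℝ² (joint distribution of data x and noise η) with finite first and second moments, let μ_X and μ_H denote the means of the two marginals, Var(x) > 0 the variance of the first marginal, and Cov(x, η) the covariance. Let σ² ∈ (0, 1] and 0 ≤ L < 1 − σ². Then among affine functions f(x) = m·x + b with m ∈ [−L, L], the functional ∫ |(1 − σ²)·x − η − f(x)|² dp(x, η) is uniquely minimized by: f*(x) = L·x + (1 − σ² − L)·μ_X − μ_H if Cov(x,η)/Var(x) < 1 − σ² − L; f*(x) = (1 − σ² − Cov(x,η)/Var(x))·x + (Cov(x,η)/Var(x))·μ_X − μ_H if Cov(x,η)/Var(x) ∈ [1 − σ² − L, 1 − σ² + L]; and f*(x) = −L·x + (1 − σ² + L)·μ_X − μ_H if Cov(x,η)/Var(x) > 1 − σ² + L. -/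
open MeasureTheory

/-- Optimal slope of the approximation training with dependent data and noise:
the value `1 - s - r` (with `r = Cov(x,η)/Var(x)`) clamped to `[-L, L]`,
expressed through the three cases of Lemma C.1. -/
noncomputable def approxSlopeGeneral (s L r : ℝ) : ℝ :=
  if r < 1 - s - L then L else if 1 - s + L < r then -L else 1 - s - r

/-!
By the bias–variance decomposition of `Z = (1 - s - m) x - η - b`, the loss equals
`Var(x) (m - t)² + (b - b(m))² + const` with `t = 1 - s - Cov(x, η) / Var(x)` and
`b(m) = (1 - s - m) μX - μH`. Hence the intercept must be `b(m)`, and the slope is the point of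
`[-L, L]` nearest to `t`, i.e. its clamp `m₀`. For `m ∈ [-L, L]` the projection inequality
`(m - m₀)² + (m₀ - t)² ≤ (m - t)²` bounds the excess loss below by
`Var(x) (m - m₀)² + (b - b(m))²`, which gives minimality and, as `Var(x) > 0`, uniqueness.
-/

open ProbabilityTheory Set

theorem sq_sub_projIcc_add_sq_le {a b c : ℝ} (h : a ≤ b) (hc : c ∈ Icc a b) (t : ℝ) :
    (c - projIcc a b h t) ^ 2 + ((projIcc a b h t : ℝ) - t) ^ 2 ≤ (c - t) ^ 2 := by
  suffices 0 ≤ (c - projIcc a b h t) * ((projIcc a b h t : ℝ) - t) by linear_combination 2 * this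
  rw [coe_projIcc]
  rcases le_total t a with hta | hat
  · rw [min_eq_right (hta.trans h), max_eq_left hta]
    exact mul_nonneg (sub_nonneg.2 hc.1) (sub_nonneg.2 hta)
  rcases le_total t b with htb | hbt
  · rw [min_eq_right htb, max_eq_right hat, sub_self, mul_zero]
  · rw [min_eq_left hbt, max_eq_right h]
    exact mul_nonneg_of_nonpos_of_nonpos (sub_nonpos.2 hc.2) (sub_nonpos.2 hbt)

theorem approxSlopeGeneral_eq_projIcc {L : ℝ} (hL : 0 ≤ L) (s r : ℝ) :
    approxSlopeGeneral s L r = projIcc (-L) L (neg_le_self hL) (1 - s - r) := by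
  rw [coe_projIcc, approxSlopeGeneral]
  split_ifs with h₁ h₂
  · rw [min_eq_left (by linarith), max_eq_right (by linarith)]
  · rw [min_eq_right (by linarith), max_eq_left (by linarith)]
  · rw [min_eq_right (by linarith), max_eq_right (by linarith)]

section
variable {Ω : Type*} [MeasurableSpace Ω] {μ : Measure Ω} [IsProbabilityMeasure μ] {X Y : Ω → ℝ}

theorem integral_sq_eq_variance_add_sq_s17 {Z : Ω → ℝ} (hZ : MemLp Z 2 μ) :
    ∫ ω, Z ω ^ 2 ∂μ = Var[Z; μ] + μ[Z] ^ 2 := by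
  rw [variance_eq_sub hZ]
  simp

theorem integral_affine_residual_sq (hX : MemLp X 2 μ) (hY : MemLp Y 2 μ) (c b : ℝ) :
    ∫ ω, (c * X ω - Y ω - b) ^ 2 ∂μ =
      c ^ 2 * Var[X; μ] - 2 * c * cov[X, Y; μ] + Var[Y; μ] + (c * μ[X] - μ[Y] - b) ^ 2 := by
  have hcX : MemLp (fun ω ↦ c * X ω) 2 μ := hX.const_mul c
  have hcXY : MemLp (fun ω ↦ c * X ω - Y ω) 2 μ := hcX.sub hY
  have hZ : MemLp (fun ω ↦ c * X ω - Y ω - b) 2 μ := hcXY.sub (memLp_const b)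
  rw [integral_sq_eq_variance_add_sq_s17 hZ, variance_sub_const hcXY.aestronglyMeasurable,
    variance_fun_sub hcX hY, variance_const_mul, covariance_const_mul_left,
    integral_sub (hcXY.integrable one_le_two) (integrable_const b),
    integral_sub (hcX.integrable one_le_two) (hY.integrable one_le_two), integral_const_mul,
    integral_const]
  simp only [probReal_univ, smul_eq_mul, one_mul]
  ring

noncomputable def approxTrainingLoss (μ : Measure Ω) (X Y : Ω → ℝ) (s m b : ℝ) : ℝ :=
  ∫ ω, ((1 - s) * X ω - Y ω - (m * X ω + b)) ^ 2 ∂μ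

noncomputable def bestIntercept (μ : Measure Ω) (X Y : Ω → ℝ) (s m : ℝ) : ℝ :=
  (1 - s - m) * μ[X] - μ[Y]

theorem approxTrainingLoss_eq (hX : MemLp X 2 μ) (hY : MemLp Y 2 μ) (hV : Var[X; μ] ≠ 0)
    (s m b : ℝ) :
    approxTrainingLoss μ X Y s m b =
      Var[X; μ] * (m - (1 - s - cov[X, Y; μ] / Var[X; μ])) ^ 2 +
        (b - bestIntercept μ X Y s m) ^ 2 + (Var[Y; μ] - cov[X, Y; μ] ^ 2 / Var[X; μ]) := by
  have hres : approxTrainingLoss μ X Y s m b = ∫ ω, ((1 - s - m) * X ω - Y ω - b) ^ 2 ∂μ := by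
    unfold approxTrainingLoss
    congr 1 with ω
    ring
  rw [hres, integral_affine_residual_sq hX hY, bestIntercept]
  field_simp
  ring

noncomputable def optimalSlope (μ : Measure Ω) (X Y : Ω → ℝ) (s L : ℝ) : ℝ :=
  approxSlopeGeneral s L (cov[X, Y; μ] / Var[X; μ])

theorem approxTrainingLoss_optimal_add_le (hX : MemLp X 2 μ) (hY : MemLp Y 2 μ)
    (hV : 0 < Var[X; μ]) (s : ℝ) {L m : ℝ} (hm : |m| ≤ L) (b : ℝ) :
    approxTrainingLoss μ X Y s (optimalSlope μ X Y s L)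
          (bestIntercept μ X Y s (optimalSlope μ X Y s L)) +
        Var[X; μ] * (m - optimalSlope μ X Y s L) ^ 2 + (b - bestIntercept μ X Y s m) ^ 2 ≤
      approxTrainingLoss μ X Y s m b := by
  have hL : 0 ≤ L := (abs_nonneg m).trans hm
  have hproj := sq_sub_projIcc_add_sq_le (neg_le_self hL) (abs_le.1 hm)
    (1 - s - cov[X, Y; μ] / Var[X; μ])
  rw [← approxSlopeGeneral_eq_projIcc hL, ← optimalSlope] at hproj
  rw [approxTrainingLoss_eq hX hY hV.ne', approxTrainingLoss_eq hX hY hV.ne', sub_self]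
  linear_combination Var[X; μ] * hproj

theorem approxTrainingLoss_minimizer (hX : MemLp X 2 μ) (hY : MemLp Y 2 μ) (hV : 0 < Var[X; μ])
    (s L : ℝ) :
    (∀ m b : ℝ, |m| ≤ L →
        approxTrainingLoss μ X Y s (optimalSlope μ X Y s L)
          (bestIntercept μ X Y s (optimalSlope μ X Y s L)) ≤ approxTrainingLoss μ X Y s m b) ∧
      (∀ m b : ℝ, |m| ≤ L →
        approxTrainingLoss μ X Y s m b ≤ approxTrainingLoss μ X Y s (optimalSlope μ X Y s L)
          (bestIntercept μ X Y s (optimalSlope μ X Y s L)) →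
        m = optimalSlope μ X Y s L ∧ b = bestIntercept μ X Y s (optimalSlope μ X Y s L)) := by
  set m₀ := optimalSlope μ X Y s L
  refine ⟨fun m b hm ↦ ?_, fun m b hm hle ↦ ?_⟩
  · have hgap := approxTrainingLoss_optimal_add_le hX hY hV s hm b
    have : 0 ≤ Var[X; μ] * (m - m₀) ^ 2 := by positivity
    linarith [sq_nonneg (b - bestIntercept μ X Y s m)]
  · have hgap := approxTrainingLoss_optimal_add_le hX hY hV s hm b
    obtain ⟨hslope, hintercept⟩ := (add_eq_zero_iff_of_nonneg (by positivity) (sq_nonneg _)).1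
      (le_antisymm (by linarith) (by positivity) :
        Var[X; μ] * (m - m₀) ^ 2 + (b - bestIntercept μ X Y s m) ^ 2 = 0)
    have hm₀ : m = m₀ := by simpa [hV.ne', sub_eq_zero] using hslope
    subst hm₀
    exact ⟨rfl, by simpa [sub_eq_zero] using hintercept⟩

end

theorem approx_training_general_noise_minimizer_general
    (p : Measure (ℝ × ℝ)) [IsProbabilityMeasure p]
    (hx2 : Integrable (fun q : ℝ × ℝ => q.1 ^ 2) p)
    (hη2 : Integrable (fun q : ℝ × ℝ => q.2 ^ 2) p)
    (hVar : 0 < ∫ q, (q.1 - ∫ q', q'.1 ∂p) ^ 2 ∂p)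
    (s L : ℝ) :
    (∀ m b : ℝ, |m| ≤ L →
        (∫ q, ((1 - s) * q.1 - q.2 -
            (approxSlopeGeneral s L
                ((∫ q', (q'.1 - ∫ q'', q''.1 ∂p) * (q'.2 - ∫ q'', q''.2 ∂p) ∂p) /
                  ∫ q', (q'.1 - ∫ q'', q''.1 ∂p) ^ 2 ∂p) * q.1 +
              ((1 - s - approxSlopeGeneral s L
                  ((∫ q', (q'.1 - ∫ q'', q''.1 ∂p) * (q'.2 - ∫ q'', q''.2 ∂p) ∂p) /
                    ∫ q', (q'.1 - ∫ q'', q''.1 ∂p) ^ 2 ∂p)) * (∫ q', q'.1 ∂p) -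
                ∫ q', q'.2 ∂p))) ^ 2 ∂p) ≤
          ∫ q, ((1 - s) * q.1 - q.2 - (m * q.1 + b)) ^ 2 ∂p) ∧
    (∀ m b : ℝ, |m| ≤ L →
        (∫ q, ((1 - s) * q.1 - q.2 - (m * q.1 + b)) ^ 2 ∂p) ≤
          (∫ q, ((1 - s) * q.1 - q.2 -
            (approxSlopeGeneral s L
                ((∫ q', (q'.1 - ∫ q'', q''.1 ∂p) * (q'.2 - ∫ q'', q''.2 ∂p) ∂p) /
                  ∫ q', (q'.1 - ∫ q'', q''.1 ∂p) ^ 2 ∂p) * q.1 +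
              ((1 - s - approxSlopeGeneral s L
                  ((∫ q', (q'.1 - ∫ q'', q''.1 ∂p) * (q'.2 - ∫ q'', q''.2 ∂p) ∂p) /
                    ∫ q', (q'.1 - ∫ q'', q''.1 ∂p) ^ 2 ∂p)) * (∫ q', q'.1 ∂p) -
                ∫ q', q'.2 ∂p))) ^ 2 ∂p) →
        m = approxSlopeGeneral s L
            ((∫ q', (q'.1 - ∫ q'', q''.1 ∂p) * (q'.2 - ∫ q'', q''.2 ∂p) ∂p) /
              ∫ q', (q'.1 - ∫ q'', q''.1 ∂p) ^ 2 ∂p) ∧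
          b = (1 - s - approxSlopeGeneral s L
                ((∫ q', (q'.1 - ∫ q'', q''.1 ∂p) * (q'.2 - ∫ q'', q''.2 ∂p) ∂p) /
                  ∫ q', (q'.1 - ∫ q'', q''.1 ∂p) ^ 2 ∂p)) * (∫ q', q'.1 ∂p) -
              ∫ q', q'.2 ∂p) := by
  have hX : MemLp (fun q : ℝ × ℝ ↦ q.1) 2 p :=
    (memLp_two_iff_integrable_sq measurable_fst.aestronglyMeasurable).2 hx2
  have hY : MemLp (fun q : ℝ × ℝ ↦ q.2) 2 p :=
    (memLp_two_iff_integrable_sq measurable_snd.aestronglyMeasurable).2 hη2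
  rw [← variance_eq_integral measurable_fst.aemeasurable] at hVar ⊢
  -- the covariance integral and the means match the statement after unfolding definitions
  exact approxTrainingLoss_minimizer hX hY hVar s L

/-- **Approximation training with dependent data and noise (Lemma C.1).** Let
`p` be a joint probability distribution of `(x, η)` on `ℝ²` with finite first
and second moments, marginal means `μX, μH`, `Var(x) > 0` and covariance
`Cov(x, η)`; let `s = σ² ∈ (0,1]` and `0 ≤ L < 1 - s`. Among affine functions
`f(x) = m x + b` with `|m| ≤ L`, the loss `∫ |(1-s)x - η - f(x)|² dp` is
uniquely minimized by the slope `m* = approxSlopeGeneral s L (Cov/Var)` and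
intercept `b* = (1 - s - m*)·μX - μH` (matching the three stated cases). -/
theorem approx_training_general_noise_minimizer
    (p : Measure (ℝ × ℝ)) [IsProbabilityMeasure p]
    (hx1 : Integrable (fun q : ℝ × ℝ => q.1) p)
    (hη1 : Integrable (fun q : ℝ × ℝ => q.2) p)
    (hx2 : Integrable (fun q : ℝ × ℝ => q.1 ^ 2) p)
    (hη2 : Integrable (fun q : ℝ × ℝ => q.2 ^ 2) p)
    (hxη : Integrable (fun q : ℝ × ℝ => q.1 * q.2) p)
    (hVar : 0 < ∫ q, (q.1 - ∫ q', q'.1 ∂p) ^ 2 ∂p)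
    (s L : ℝ) (hs0 : 0 < s) (hs1 : s ≤ 1) (hL0 : 0 ≤ L) (hL : L < 1 - s) :
    (∀ m b : ℝ, |m| ≤ L →
        (∫ q, ((1 - s) * q.1 - q.2 -
            (approxSlopeGeneral s L
                ((∫ q', (q'.1 - ∫ q'', q''.1 ∂p) * (q'.2 - ∫ q'', q''.2 ∂p) ∂p) /
                  ∫ q', (q'.1 - ∫ q'', q''.1 ∂p) ^ 2 ∂p) * q.1 +
              ((1 - s - approxSlopeGeneral s L
                  ((∫ q', (q'.1 - ∫ q'', q''.1 ∂p) * (q'.2 - ∫ q'', q''.2 ∂p) ∂p) /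
                    ∫ q', (q'.1 - ∫ q'', q''.1 ∂p) ^ 2 ∂p)) * (∫ q', q'.1 ∂p) -
                ∫ q', q'.2 ∂p))) ^ 2 ∂p) ≤
          ∫ q, ((1 - s) * q.1 - q.2 - (m * q.1 + b)) ^ 2 ∂p) ∧
    (∀ m b : ℝ, |m| ≤ L →
        (∫ q, ((1 - s) * q.1 - q.2 - (m * q.1 + b)) ^ 2 ∂p) ≤
          (∫ q, ((1 - s) * q.1 - q.2 -
            (approxSlopeGeneral s L
                ((∫ q', (q'.1 - ∫ q'', q''.1 ∂p) * (q'.2 - ∫ q'', q''.2 ∂p) ∂p) /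
                  ∫ q', (q'.1 - ∫ q'', q''.1 ∂p) ^ 2 ∂p) * q.1 +
              ((1 - s - approxSlopeGeneral s L
                  ((∫ q', (q'.1 - ∫ q'', q''.1 ∂p) * (q'.2 - ∫ q'', q''.2 ∂p) ∂p) /
                    ∫ q', (q'.1 - ∫ q'', q''.1 ∂p) ^ 2 ∂p)) * (∫ q', q'.1 ∂p) -
                ∫ q', q'.2 ∂p))) ^ 2 ∂p) →
        m = approxSlopeGeneral s L
            ((∫ q', (q'.1 - ∫ q'', q''.1 ∂p) * (q'.2 - ∫ q'', q''.2 ∂p) ∂p) /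
              ∫ q', (q'.1 - ∫ q'', q''.1 ∂p) ^ 2 ∂p) ∧
          b = (1 - s - approxSlopeGeneral s L
                ((∫ q', (q'.1 - ∫ q'', q''.1 ∂p) * (q'.2 - ∫ q'', q''.2 ∂p) ∂p) /
                  ∫ q', (q'.1 - ∫ q'', q''.1 ∂p) ^ 2 ∂p)) * (∫ q', q'.1 ∂p) -
              ∫ q', q'.2 ∂p) :=
  approx_training_general_noise_minimizer_general p hx2 hη2 hVar s L
end

section
/- Let 0 ≤ L < 1, z₀ < z₁ in ℝ, let p_Z : [z₀, z₁] → ℝ_{≥0} be continuous with ∫_{z₀}^{z₁} p_Z(z) dz > 0, and let ψ̂ : [z₀, z₁] → ℝ be continuously differentiable with ψ̂′(z) > 1/(1−L) for all z ∈ [z₀, z₁]. Then among all piecewise continuously differentiable functions ψ : [z₀, z₁] → ℝ whose derivative satisfies 1/(1+L) ≤ ψ′(z) ≤ 1/(1−L) wherever it exists, the weighted squared distance ∫_{z₀}^{z₁} p_Z(z)·|ψ(z) − ψ̂(z)|² dz is minimized by the affine function ψ*(z) = z/(1−L) + c, where c = (∫_{z₀}^{z₁} p_Z(z̃)·ψ̂(z̃)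 dz̃ − (1/(1−L))·∫_{z₀}^{z₁} p_Z(z̃)·z̃ dz̃) / ∫_{z₀}^{z₁} p_Z(z̃) dz̃. -/
/-!
Put `f = ψ* - ψ̂` and `g = ψ - ψ*`. Both are antitone: `f' = 1/(1-L) - ψ̂' < 0`, and
`g' = ψ' - 1/(1-L) ≤ 0` off a finite set. The constant `c` is exactly what makes `∫ p_Z f = 0`,
so `f` vanishes at some `z*`, and `f` and `g - g z*` then have the same sign everywhere. Hence
`∫ p_Z f g = ∫ p_Z f (g - g z*) ≥ 0`, and
`∫ p_Z (ψ - ψ̂)² = ∫ p_Z (f + g)² ≥ ∫ p_Z f² + 2 ∫ p_Z f g ≥ ∫ p_Z f²`.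
-/

open MeasureTheory intervalIntegral Set

theorem antitoneOn_Icc_of_hasDerivAt_nonpos_off_finset {g : ℝ → ℝ} (S : Finset ℝ) :
    ∀ {a b : ℝ}, ContinuousOn g (Icc a b) →
      (∀ x ∈ Ioo a b \ (S : Set ℝ), ∃ d, HasDerivAt g d x ∧ d ≤ 0) →
      AntitoneOn g (Icc a b) := by
  induction S using Finset.induction_on with
  | empty =>
    intro a b hg hd
    simp only [Finset.coe_empty, sdiff_empty] at hd
    choose g' hg' hg'_nonpos using hd
    refine antitoneOn_of_deriv_nonpos (convex_Icc a b) hg (fun x hx => ?_) fun x hx => ?_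
    · rw [interior_Icc] at hx
      exact (hg' x hx).differentiableAt.differentiableWithinAt
    · rw [interior_Icc] at hx
      exact (hg' x hx).deriv ▸ hg'_nonpos x hx
  | insert s S _ ih =>
    intro a b hg hd
    by_cases hs : s ∈ Ioo a b
    · rw [← Icc_union_Icc_eq_Icc hs.1.le hs.2.le]
      refine AntitoneOn.union_right (ih (hg.mono (Icc_subset_Icc_right hs.2.le)) fun x hx => ?_)
        (ih (hg.mono (Icc_subset_Icc_left hs.1.le)) fun x hx => ?_)
        (isGreatest_Icc hs.1.le) (isLeast_Icc hs.2.le)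
      · exact hd x ⟨⟨hx.1.1, hx.1.2.trans hs.2⟩, by simp [hx.2, hx.1.2.ne]⟩
      · exact hd x ⟨⟨hs.1.trans hx.1.1, hx.1.2⟩, by simp [hx.2, hx.1.1.ne']⟩
    · refine ih hg fun x hx => hd x ⟨hx.1, ?_⟩
      simp only [Finset.coe_insert, mem_insert_iff, not_or]
      exact ⟨fun h => hs (h ▸ hx.1), hx.2⟩

section WeightedIntegral

variable {a b : ℝ} {p f g : ℝ → ℝ}

theorem integral_mul_le_integral_mul_of_le (hab : a ≤ b) (hp : ContinuousOn p (Icc a b))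
    (hp0 : ∀ x ∈ Icc a b, 0 ≤ p x) (hf : ContinuousOn f (Icc a b))
    (hfg : ∀ x ∈ Icc a b, f x ≤ g x) (hg : ContinuousOn g (Icc a b)) :
    ∫ x in a..b, p x * f x ≤ ∫ x in a..b, p x * g x :=
  integral_mono_on hab ((hp.mul hf).intervalIntegrable_of_Icc hab)
    ((hp.mul hg).intervalIntegrable_of_Icc hab)
    fun x hx => mul_le_mul_of_nonneg_left (hfg x hx) (hp0 x hx)

theorem exists_eq_zero_of_antitoneOn_of_integral_mul_eq_zero (hab : a ≤ b)
    (hp : ContinuousOn p (Icc a b)) (hp0 : ∀ x ∈ Icc a b, 0 ≤ p x)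
    (hp_pos : 0 < ∫ x in a..b, p x) (hf : ContinuousOn f (Icc a b))
    (hf_anti : AntitoneOn f (Icc a b)) (hpf : ∫ x in a..b, p x * f x = 0) :
    ∃ c ∈ Icc a b, f c = 0 := by
  have ha : a ∈ Icc a b := left_mem_Icc.2 hab
  have hb : b ∈ Icc a b := right_mem_Icc.2 hab
  have hfb : (∫ x in a..b, p x) * f b ≤ 0 := by
    rw [← intervalIntegral.integral_mul_const, ← hpf]
    exact integral_mul_le_integral_mul_of_le hab hp hp0 continuousOn_const
      (fun x hx => hf_anti hx hb hx.2) hf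
  have hfa : 0 ≤ (∫ x in a..b, p x) * f a := by
    rw [← intervalIntegral.integral_mul_const, ← hpf]
    exact integral_mul_le_integral_mul_of_le hab hp hp0 hf
      (fun x hx => hf_anti ha hx hx.1) continuousOn_const
  exact intermediate_value_Icc' hab hf
    ⟨nonpos_of_mul_nonpos_right hfb hp_pos, nonneg_of_mul_nonneg_right hfa hp_pos⟩

theorem integral_mul_mul_nonneg_of_antitoneOn (hab : a ≤ b)
    (hp : ContinuousOn p (Icc a b)) (hp0 : ∀ x ∈ Icc a b, 0 ≤ p x)
    (hp_pos : 0 < ∫ x in a..b, p x) (hf : ContinuousOn f (Icc a b))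
    (hf_anti : AntitoneOn f (Icc a b)) (hpf : ∫ x in a..b, p x * f x = 0)
    (hg : ContinuousOn g (Icc a b)) (hg_anti : AntitoneOn g (Icc a b)) :
    0 ≤ ∫ x in a..b, p x * f x * g x := by
  obtain ⟨c, hc, hfc⟩ :=
    exists_eq_zero_of_antitoneOn_of_integral_mul_eq_zero hab hp hp0 hp_pos hf hf_anti hpf
  have hsign : ∀ x ∈ Icc a b, 0 ≤ f x * (g x - g c) := by
    intro x hx
    rcases le_total x c with hxc | hcx
    · exact mul_nonneg (hfc ▸ hf_anti hx hc hxc) (sub_nonneg.2 (hg_anti hx hc hxc))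
    · exact mul_nonneg_of_nonpos_of_nonpos (hfc ▸ hf_anti hc hx hcx)
        (sub_nonpos.2 (hg_anti hc hx hcx))
  calc 0 = ∫ x in a..b, p x * f x * g c := by
        rw [intervalIntegral.integral_mul_const, hpf, zero_mul]
    _ ≤ ∫ x in a..b, p x * f x * g x :=
      integral_mono_on hab (((hp.mul hf).mul continuousOn_const).intervalIntegrable_of_Icc hab)
        (((hp.mul hf).mul hg).intervalIntegrable_of_Icc hab) fun x hx => by
          nlinarith [mul_nonneg (hp0 x hx) (hsign x hx)]

theorem integral_mul_sub_sq_le_of_integral_mul_mul_nonneg {φ ψ ψ₀ : ℝ → ℝ} (hab : a ≤ b)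
    (hp : ContinuousOn p (Icc a b)) (hp0 : ∀ x ∈ Icc a b, 0 ≤ p x)
    (hφ : ContinuousOn φ (Icc a b)) (hψ : ContinuousOn ψ (Icc a b))
    (hψ₀ : ContinuousOn ψ₀ (Icc a b))
    (h : 0 ≤ ∫ x in a..b, p x * (φ x - ψ₀ x) * (ψ x - φ x)) :
    ∫ x in a..b, p x * (φ x - ψ₀ x) ^ 2 ≤ ∫ x in a..b, p x * (ψ x - ψ₀ x) ^ 2 := by
  have hA : ContinuousOn (fun x => p x * (φ x - ψ₀ x) ^ 2) (Icc a b) :=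
    hp.mul ((hφ.sub hψ₀).pow 2)
  have hB : ContinuousOn (fun x => p x * (φ x - ψ₀ x) * (ψ x - φ x)) (Icc a b) :=
    (hp.mul (hφ.sub hψ₀)).mul (hψ.sub hφ)
  calc ∫ x in a..b, p x * (φ x - ψ₀ x) ^ 2
      ≤ (∫ x in a..b, p x * (φ x - ψ₀ x) ^ 2) +
          2 * ∫ x in a..b, p x * (φ x - ψ₀ x) * (ψ x - φ x) := by linarith
    _ = ∫ x in a..b, p x * (φ x - ψ₀ x) ^ 2 + 2 * (p x * (φ x - ψ₀ x) * (ψ x - φ x)) := by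
      rw [intervalIntegral.integral_add (hA.intervalIntegrable_of_Icc hab)
        ((hB.intervalIntegrable_of_Icc hab).const_mul 2), intervalIntegral.integral_const_mul]
    _ ≤ ∫ x in a..b, p x * (ψ x - ψ₀ x) ^ 2 :=
      integral_mono_on hab ((hA.add (continuousOn_const.mul hB)).intervalIntegrable_of_Icc hab)
        ((hp.mul ((hψ.sub hψ₀).pow 2)).intervalIntegrable_of_Icc hab) fun x hx => by
          nlinarith [mul_nonneg (hp0 x hx) (sq_nonneg (ψ x - φ x))]

theorem integral_mul_affine_fit_sub_eq_zero {ψ₀ : ℝ → ℝ} (hp : IntervalIntegrable p volume a b)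
    (hpψ₀ : IntervalIntegrable (fun x => p x * ψ₀ x) volume a b)
    (hpx : IntervalIntegrable (fun x => p x * x) volume a b) (hI : ∫ x in a..b, p x ≠ 0)
    (k : ℝ) :
    ∫ x in a..b, p x * (x * k + ((∫ y in a..b, p y * ψ₀ y) - k * ∫ y in a..b, p y * y) /
      (∫ y in a..b, p y) - ψ₀ x) = 0 := by
  set c := ((∫ y in a..b, p y * ψ₀ y) - k * ∫ y in a..b, p y * y) / ∫ y in a..b, p y
  have hc : (∫ y in a..b, p y) * c = (∫ y in a..b, p y * ψ₀ y) - k * ∫ y in a..b, p y * y :=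
    mul_div_cancel₀ _ hI
  calc ∫ x in a..b, p x * (x * k + c - ψ₀ x)
      = ∫ x in a..b, p x * x * k + p x * c - p x * ψ₀ x := by
        congr 1; funext x; ring
    _ = 0 := by
      rw [intervalIntegral.integral_sub ((hpx.mul_const k).add (hp.mul_const c)) hpψ₀,
        intervalIntegral.integral_add (hpx.mul_const k) (hp.mul_const c),
        intervalIntegral.integral_mul_const, intervalIntegral.integral_mul_const]
      linarith

end WeightedIntegral

theorem projection_of_steep_posterior_mean_general
    (L z₀ z₁ : ℝ) (hz : z₀ < z₁)
    (pZ : ℝ → ℝ) (hpZcont : ContinuousOn pZ (Set.Icc z₀ z₁))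
    (hpZnonneg : ∀ z ∈ Set.Icc z₀ z₁, 0 ≤ pZ z)
    (hpZpos : 0 < ∫ z in z₀..z₁, pZ z)
    (ψhat ψhat' : ℝ → ℝ)
    (hψhatderiv : ∀ z ∈ Set.Icc z₀ z₁,
      HasDerivWithinAt ψhat (ψhat' z) (Set.Icc z₀ z₁) z)
    (hψhat'big : ∀ z ∈ Set.Icc z₀ z₁, 1 / (1 - L) < ψhat' z) :
    ∀ ψ : ℝ → ℝ, ContinuousOn ψ (Set.Icc z₀ z₁) →
      (∃ S : Finset ℝ, ∀ z ∈ Set.Icc z₀ z₁ \ (S : Set ℝ),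
        ∃ d : ℝ, HasDerivWithinAt ψ d (Set.Icc z₀ z₁) z ∧
          1 / (1 + L) ≤ d ∧ d ≤ 1 / (1 - L)) →
      (∫ z in z₀..z₁, pZ z *
          (z / (1 - L) +
              ((∫ y in z₀..z₁, pZ y * ψhat y) -
                (1 / (1 - L)) * ∫ y in z₀..z₁, pZ y * y) /
                (∫ y in z₀..z₁, pZ y) -
            ψhat z) ^ 2) ≤
        ∫ z in z₀..z₁, pZ z * (ψ z - ψhat z) ^ 2 := by
  rintro ψ hψ ⟨S, hψderiv⟩
  set φ : ℝ → ℝ := fun z => z / (1 - L) +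
    ((∫ y in z₀..z₁, pZ y * ψhat y) - (1 / (1 - L)) * ∫ y in z₀..z₁, pZ y * y) /
      (∫ y in z₀..z₁, pZ y)
  have hφ_deriv (x : ℝ) : HasDerivAt φ (1 / (1 - L)) x :=
    ((hasDerivAt_id' x).div_const (1 - L)).add_const _
  have hφ : ContinuousOn φ (Icc z₀ z₁) := fun x _ => (hφ_deriv x).continuousAt.continuousWithinAt
  have hψhat : ContinuousOn ψhat (Icc z₀ z₁) := fun x hx => (hψhatderiv x hx).continuousWithinAt
  have hf_anti : AntitoneOn (fun z => φ z - ψhat z) (Icc z₀ z₁) :=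
    antitoneOn_Icc_of_hasDerivAt_nonpos_off_finset ∅ (hφ.sub hψhat) fun x hx =>
      ⟨_, (hφ_deriv x).sub ((hψhatderiv x (Ioo_subset_Icc_self hx.1)).hasDerivAt
        (Icc_mem_nhds hx.1.1 hx.1.2)), by linarith [hψhat'big x (Ioo_subset_Icc_self hx.1)]⟩
  have hg_anti : AntitoneOn (fun z => ψ z - φ z) (Icc z₀ z₁) := by
    refine antitoneOn_Icc_of_hasDerivAt_nonpos_off_finset S (hψ.sub hφ) fun x hx => ?_
    obtain ⟨d, hd, -, hd_le⟩ := hψderiv x ⟨Ioo_subset_Icc_self hx.1, hx.2⟩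
    exact ⟨_, (hd.hasDerivAt (Icc_mem_nhds hx.1.1 hx.1.2)).sub (hφ_deriv x), by linarith⟩
  have hpf : ∫ z in z₀..z₁, pZ z * (φ z - ψhat z) = 0 := by
    simpa only [mul_one_div] using integral_mul_affine_fit_sub_eq_zero
      (hpZcont.intervalIntegrable_of_Icc hz.le)
      ((hpZcont.mul hψhat).intervalIntegrable_of_Icc hz.le)
      ((hpZcont.mul continuousOn_id).intervalIntegrable_of_Icc hz.le) hpZpos.ne' (1 / (1 - L))
  exact integral_mul_sub_sq_le_of_integral_mul_mul_nonneg hz.le hpZcont hpZnonneg hφ hψ hψhat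
    (integral_mul_mul_nonneg_of_antitoneOn hz.le hpZcont hpZnonneg hpZpos (hφ.sub hψhat)
      hf_anti hpf (hψ.sub hφ) hg_anti)

/-- **Constrained projection of a steep target (optimal-control example).** Let
`0 ≤ L < 1`, `z₀ < z₁`, `p_Z ≥ 0` continuous on `[z₀, z₁]` with positive
integral, and let `ψ̂` be continuously differentiable on `[z₀, z₁]` with
`ψ̂′ > 1/(1-L)` there. Among all continuous, piecewise continuously
differentiable `ψ` on `[z₀, z₁]` whose derivative (wherever it exists, i.e.
off a finite set) lies in `[1/(1+L), 1/(1-L)]`, the weighted squared distance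
`∫ p_Z (ψ - ψ̂)²` is minimized by the affine function
`ψ*(z) = z/(1-L) + c` with
`c = (∫ p_Z ψ̂ - (1/(1-L)) ∫ p_Z z dz) / ∫ p_Z`. -/
theorem projection_of_steep_posterior_mean
    (L z₀ z₁ : ℝ) (hL0 : 0 ≤ L) (hL1 : L < 1) (hz : z₀ < z₁)
    (pZ : ℝ → ℝ) (hpZcont : ContinuousOn pZ (Set.Icc z₀ z₁))
    (hpZnonneg : ∀ z ∈ Set.Icc z₀ z₁, 0 ≤ pZ z)
    (hpZpos : 0 < ∫ z in z₀..z₁, pZ z)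
    (ψhat ψhat' : ℝ → ℝ)
    (hψhatderiv : ∀ z ∈ Set.Icc z₀ z₁,
      HasDerivWithinAt ψhat (ψhat' z) (Set.Icc z₀ z₁) z)
    (hψhat'cont : ContinuousOn ψhat' (Set.Icc z₀ z₁))
    (hψhat'big : ∀ z ∈ Set.Icc z₀ z₁, 1 / (1 - L) < ψhat' z) :
    ∀ ψ : ℝ → ℝ, ContinuousOn ψ (Set.Icc z₀ z₁) →
      (∃ S : Finset ℝ, ∀ z ∈ Set.Icc z₀ z₁ \ (S : Set ℝ),
        ∃ d : ℝ, HasDerivWithinAt ψ d (Set.Icc z₀ z₁) z ∧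
          1 / (1 + L) ≤ d ∧ d ≤ 1 / (1 - L)) →
      (∫ z in z₀..z₁, pZ z *
          (z / (1 - L) +
              ((∫ y in z₀..z₁, pZ y * ψhat y) -
                (1 / (1 - L)) * ∫ y in z₀..z₁, pZ y * y) /
                (∫ y in z₀..z₁, pZ y) -
            ψhat z) ^ 2) ≤
        ∫ z in z₀..z₁, pZ z * (ψ z - ψhat z) ^ 2 :=
  projection_of_steep_posterior_mean_general L z₀ z₁ hz pZ hpZcont hpZnonneg hpZpos ψhat ψhat'
    hψhatderiv hψhat'big
end
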